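/- arXiv:0804.1340 — 7 statements merged into one kernel-verified Lean document; each statement's English description precedes it below -/
import Mathlib

section
/- Let M₁ be the midpoint of O and B, and M₂ the midpoint of O and Γ. The area of the trapezoid O₁ O₂ M₂ M₁, i.e., the Lebesgue measure of the convex hull of {O₁, O₂, M₂, M₁}, equals α⁴ / (16βγ), where α = dist B Γ, β = dist A Γ, γ = dist A B. -/
/-!
`O₁` lies on the perpendicular bisector of `OB`, the line through `M₁` perpendicular to `BΓ`, and
likewise `O₂` on the perpendicular to `BΓ` through `M₂`; so `O₁ M₁ M₂ O₂` is a right trapezoid of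
height `M₁M₂ = α / 2`. With `u = B - A` and `v = Γ - A` orthogonal, the equidistance conditions
prescribe the inner products of `O₁ - M₁` with `u` and `v`, which in the plane determine it:
`O₁ - M₁ = -(u + (γ² / β²) v) / 4`, and symmetrically `O₂ - M₂ = (β² / γ²) (O₁ - M₁)`. The parallel
sides thus have lengths `γα / (4β)` and `βα / (4γ)`, and by Pythagoras `α² = β² + γ²` the area
`(α / 4) (γα / (4β) + βα / (4γ))` is `α⁴ / (16βγ)`. The area itself is obtained by mapping the
trapezoid with vertices `(0, 1), (1, c), (1, 0), (0, 0)`, `c = β² / γ²`, of area `(1 + c) / 2`,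
affinely onto it.
-/

open MeasureTheory Set Module RealInnerProductSpace Pointwise

section InnerProductSpace

variable {E : Type*} [NormedAddCommGroup E] [InnerProductSpace ℝ E]

theorem eq_of_inner_eq_of_finrank_eq_two (hE : finrank ℝ E = 2) {u v x y : E} (hu : u ≠ 0)
    (hv : v ≠ 0) (huv : ⟪u, v⟫ = 0) (hxu : ⟪u, x⟫ = ⟪u, y⟫) (hxv : ⟪v, x⟫ = ⟪v, y⟫) : x = y := by
  have hind : LinearIndependent ℝ ![u, v] :=
    linearIndependent_of_ne_zero_of_inner_eq_zero (by simp [Fin.forall_fin_two, hu, hv])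
      (by simp [Pairwise, Fin.forall_fin_two, huv, real_inner_comm u v])
  refine InnerProductSpace.ext_inner_left_basis
    (basisOfLinearIndependentOfCardEqFinrank hind (by simp [hE])) ?_
  simp [Fin.forall_fin_two, hxu, hxv]

theorem two_inner_sub_eq_norm_sq_of_dist_eq {P A B : E} (h : dist P A = dist P B) :
    2 * ⟪P - A, B - A⟫ = ‖B - A‖ ^ 2 := by
  have hsq : ‖P - A‖ ^ 2 = ‖(P - A) - (B - A)‖ ^ 2 := by
    rw [sub_sub_sub_cancel_right, ← dist_eq_norm, ← dist_eq_norm, h]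
  rw [norm_sub_sq_real (P - A)] at hsq
  linarith

theorem sub_eq_of_dist_eq_of_eq_midpoint (hE : finrank ℝ E = 2) {A B C O M P : E} (hB : B ≠ A)
    (hC : C ≠ A) (hright : ⟪B - A, C - A⟫ = 0) (hO : O = midpoint ℝ B C) (hM : M = midpoint ℝ O B)
    (hPA : dist P A = dist P O) (hPO : dist P O = dist P B) :
    P - M = -(1 / 4 : ℝ) • ((B - A) + (‖B - A‖ ^ 2 / ‖C - A‖ ^ 2) • (C - A)) := by
  have hOA : O - A = (1 / 2 : ℝ) • ((B - A) + (C - A)) := by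
    rw [hO, midpoint_eq_smul_add, invOf_eq_inv]; module
  have hPM : P - M = (P - A) - (3 / 4 : ℝ) • (B - A) - (1 / 4 : ℝ) • (C - A) := by
    rw [hM, hO, midpoint_eq_smul_add, midpoint_eq_smul_add, invOf_eq_inv]; module
  have hxu := two_inner_sub_eq_norm_sq_of_dist_eq (hPA.trans hPO)
  have hxo := two_inner_sub_eq_norm_sq_of_dist_eq hPA
  rw [hOA, norm_smul, mul_pow, norm_add_sq_real, hright] at hxo
  norm_num at hxo
  have hu : B - A ≠ 0 := sub_ne_zero.2 hB
  have hv : C - A ≠ 0 := sub_ne_zero.2 hC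
  rw [hPM]
  generalize P - A = x at *
  generalize B - A = u at *
  generalize C - A = v at *
  rw [inner_add_right, inner_smul_right, inner_smul_right] at hxo
  refine eq_of_inner_eq_of_finrank_eq_two hE hu hv hright ?_ ?_ <;>
    simp only [inner_sub_right, inner_add_right, inner_smul_right, real_inner_self_eq_norm_sq,
      real_inner_comm x u, real_inner_comm x v, real_inner_comm u v, hright] <;>
    field_simp [hv]
  · linear_combination (2 * ‖v‖ ^ 2) * hxu
  · linear_combination 4 * hxo - 2 * hxu

theorem inner_sub_add_div_smul_of_inner_eq_zero {u v : E} (huv : ⟪u, v⟫ = 0) (hv : v ≠ 0) :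
    ⟪v - u, u + (‖u‖ ^ 2 / ‖v‖ ^ 2) • v⟫ = 0 := by
  rw [inner_sub_left, inner_add_right, inner_add_right, inner_smul_right, inner_smul_right,
    real_inner_comm, huv, real_inner_self_eq_norm_sq, real_inner_self_eq_norm_sq]
  field_simp [hv]
  ring

theorem norm_add_div_smul_of_inner_eq_zero {u v : E} (huv : ⟪u, v⟫ = 0) (hv : v ≠ 0) :
    ‖u + (‖u‖ ^ 2 / ‖v‖ ^ 2) • v‖ = ‖u‖ * ‖v - u‖ / ‖v‖ := by
  rw [← sq_eq_sq₀ (norm_nonneg _) (by positivity), div_pow, mul_pow, norm_sub_sq_real,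
    norm_add_sq_real, inner_smul_right, norm_smul, mul_pow, real_inner_comm u v, huv,
    Real.norm_eq_abs, sq_abs]
  field_simp [hv]
  ring

end InnerProductSpace

theorem volume_trapezoidRegion_prod {c : ℝ} (hc : 0 ≤ c) :
    volume {q : ℝ × ℝ | q.1 ∈ Icc 0 1 ∧ q.2 ∈ Icc 0 (1 + (c - 1) * q.1)} =
      ENNReal.ofReal ((1 + c) / 2) := by
  have hg : Continuous fun x : ℝ => 1 + (c - 1) * x := by fun_prop
  have hslice (x : ℝ) :
      volume (Prod.mk x ⁻¹' {q : ℝ × ℝ | q.1 ∈ Icc 0 1 ∧ q.2 ∈ Icc 0 (1 + (c - 1) * q.1)}) =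
        (Icc 0 1).indicator (fun x => ENNReal.ofReal (1 + (c - 1) * x)) x := by
    by_cases hx : x ∈ Icc (0 : ℝ) 1
    · rw [indicator_of_mem hx, ← sub_zero (1 + (c - 1) * x), ← Real.volume_Icc]
      congr 1
      ext y
      simp [hx.1, hx.2]
    · rw [indicator_of_notMem hx, ← measure_empty (μ := (volume : Measure ℝ))]
      congr 1
      ext y
      exact iff_of_false (fun h => hx h.1) id
  have hint : ∫ x in (0 : ℝ)..1, 1 + (c - 1) * x = (1 + c) / 2 := by
    rw [intervalIntegral.integral_add (by simp)
      (by exact (continuous_const_mul (c - 1)).intervalIntegrable 0 1),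
      intervalIntegral.integral_const_mul, intervalIntegral.integral_const, integral_id,
      smul_eq_mul]
    ring
  rw [Measure.volume_eq_prod, Measure.prod_apply (measurableSet_region_between_cc
    measurable_const hg.measurable measurableSet_Icc)]
  simp_rw [hslice]
  rw [lintegral_indicator measurableSet_Icc, ← ofReal_integral_eq_lintegral_ofReal
    hg.integrableOn_Icc, integral_Icc_eq_integral_Ioc,
    ← intervalIntegral.integral_of_le zero_le_one, hint]
  filter_upwards [ae_restrict_mem measurableSet_Icc] with x hx
  rw [Pi.zero_apply]
  nlinarith [hx.1, hx.2]

def trapezoidRegion (c : ℝ) : Set (EuclideanSpace ℝ (Fin 2)) :=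
  {p | p 0 ∈ Icc 0 1 ∧ p 1 ∈ Icc 0 (1 + (c - 1) * p 0)}

theorem volume_trapezoidRegion {c : ℝ} (hc : 0 ≤ c) :
    volume (trapezoidRegion c) = ENNReal.ofReal ((1 + c) / 2) := by
  have hmp : MeasurePreserving (fun p : EuclideanSpace ℝ (Fin 2) => (p 0, p 1)) :=
    (volume_preserving_finTwoArrow ℝ).comp (PiLp.volume_preserving_ofLp (Fin 2))
  rw [← volume_trapezoidRegion_prod hc, ← hmp.measure_preimage]
  · rfl
  · exact (measurableSet_region_between_cc measurable_const
      (by fun_prop : Measurable fun x : ℝ => 1 + (c - 1) * x) measurableSet_Icc).nullMeasurableSet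

theorem convexHull_eq_trapezoidRegion {c : ℝ} (hc : 0 < c) :
    convexHull ℝ {!₂[0, 1], !₂[1, c], !₂[1, 0], !₂[0, 0]} = trapezoidRegion c := by
  set K := convexHull ℝ {!₂[0, 1], !₂[1, c], !₂[1, 0], !₂[0, 0]}
  apply (convexHull_min ?_ ?_).antisymm
  · rintro p ⟨⟨hx0, hx1⟩, hy0, hy1⟩
    have hh : 0 < 1 + (c - 1) * p 0 := by
      nlinarith [mul_le_mul_of_nonneg_left (min_le_left 1 c) (sub_nonneg.2 hx1),
        mul_le_mul_of_nonneg_left (min_le_right 1 c) hx0, lt_min one_pos hc]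
    have hconv : Convex ℝ K := convex_convexHull ℝ _
    have hvert : ∀ q ∈ ({!₂[0, 1], !₂[1, c], !₂[1, 0], !₂[0, 0]} : Set _), q ∈ K :=
      subset_convexHull ℝ _
    -- `p` lies on the vertical segment between these two points of the parallel sides
    have hbot := hconv (hvert !₂[0, 0] (by simp)) (hvert !₂[1, 0] (by simp))
      (sub_nonneg.2 hx1) hx0 (sub_add_cancel 1 (p 0))
    have htop := hconv (hvert !₂[0, 1] (by simp)) (hvert !₂[1, c] (by simp))
      (sub_nonneg.2 hx1) hx0 (sub_add_cancel 1 (p 0))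
    convert hconv hbot htop (sub_nonneg.2 ((div_le_one hh).2 hy1)) (div_nonneg hy0 hh.le)
      (sub_add_cancel 1 _) using 1
    ext i
    fin_cases i
    · simp only [Fin.zero_eta, smul_add, PiLp.add_apply, PiLp.smul_apply, Matrix.cons_val_zero,
        smul_eq_mul, mul_zero, mul_one, zero_add]
      ring
    · simp only [Fin.mk_one, smul_add, PiLp.add_apply, PiLp.smul_apply, Matrix.cons_val_one,
        Matrix.cons_val_fin_one, smul_eq_mul, mul_zero, add_zero, mul_one, zero_add]
      field_simp
      ring
  · rintro p (rfl | rfl | rfl | rfl) <;> simp [trapezoidRegion, hc.le]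
  · rintro p ⟨⟨hp0, hp1⟩, hp2, hp3⟩ q ⟨⟨hq0, hq1⟩, hq2, hq3⟩ a b ha hb hab
    simp only [trapezoidRegion, mem_ofPred_eq, PiLp.add_apply, PiLp.smul_apply, smul_eq_mul,
      mem_Icc]
    refine ⟨⟨by nlinarith, by nlinarith⟩, by nlinarith, by nlinarith⟩

noncomputable def linearMapOfColumns (d w : EuclideanSpace ℝ (Fin 2)) :
    EuclideanSpace ℝ (Fin 2) →ₗ[ℝ] EuclideanSpace ℝ (Fin 2) :=
  (EuclideanSpace.basisFun (Fin 2) ℝ).toBasis.constr ℝ ![d, w]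

theorem linearMapOfColumns_apply (d w p : EuclideanSpace ℝ (Fin 2)) :
    linearMapOfColumns d w p = p 0 • d + p 1 • w := by
  simp [linearMapOfColumns, Module.Basis.constr_apply_fintype, Fin.sum_univ_two]

theorem abs_det_linearMapOfColumns {d w : EuclideanSpace ℝ (Fin 2)} (h : ⟪d, w⟫ = 0) :
    |LinearMap.det (linearMapOfColumns d w)| = ‖d‖ * ‖w‖ := by
  have hdet : LinearMap.det (linearMapOfColumns d w) = d 0 * w 1 - w 0 * d 1 := by
    rw [← LinearMap.det_toMatrix (EuclideanSpace.basisFun (Fin 2) ℝ).toBasis, Matrix.det_fin_two]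
    simp [LinearMap.toMatrix_apply, linearMapOfColumns]
  have hinner : d 0 * w 0 + d 1 * w 1 = 0 := by
    simpa [PiLp.inner_apply, Fin.sum_univ_two, mul_comm] using h
  have hnorm (x : EuclideanSpace ℝ (Fin 2)) : ‖x‖ = √(x 0 ^ 2 + x 1 ^ 2) := by
    simp [EuclideanSpace.norm_eq, Fin.sum_univ_two]
  rw [hdet, hnorm, hnorm, ← Real.sqrt_mul (by positivity), ← Real.sqrt_sq_eq_abs]
  congr 1
  linear_combination (-(d 0 * w 0 + d 1 * w 1)) * hinner

theorem volume_convexHull_trapezoid (M d w : EuclideanSpace ℝ (Fin 2)) {c : ℝ} (hc : 0 < c)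
    (hdw : ⟪d, w⟫ = 0) :
    volume (convexHull ℝ {M + w, M + d + c • w, M + d, M}) =
      ENNReal.ofReal ((1 + c) / 2 * (‖d‖ * ‖w‖)) := by
  have himage : ({M + w, M + d + c • w, M + d, M} : Set (EuclideanSpace ℝ (Fin 2))) =
      M +ᵥ linearMapOfColumns d w '' {!₂[0, 1], !₂[1, c], !₂[1, 0], !₂[0, 0]} := by
    simp [image_insert_eq, linearMapOfColumns_apply, vadd_set_insert, add_assoc]
  rw [himage, convexHull_vadd, ← LinearMap.image_convexHull, measure_vadd,
    Measure.addHaar_image_linearMap, convexHull_eq_trapezoidRegion hc,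
    volume_trapezoidRegion hc.le, abs_det_linearMapOfColumns hdw,
    ← ENNReal.ofReal_mul (by positivity), mul_comm]

theorem area_trapezoid (A B Γ O O₁ O₂ : EuclideanSpace ℝ (Fin 2))
    (hAB : A ≠ B) (hAΓ : A ≠ Γ)
    (hright : inner ℝ (B - A) (Γ - A) = (0 : ℝ))
    (hO : O = midpoint ℝ B Γ)
    (h1 : dist O₁ A = dist O₁ O) (h1' : dist O₁ O = dist O₁ B)
    (h2 : dist O₂ A = dist O₂ O) (h2' : dist O₂ O = dist O₂ Γ)
    (M₁ M₂ : EuclideanSpace ℝ (Fin 2))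
    (hM₁ : M₁ = midpoint ℝ O B) (hM₂ : M₂ = midpoint ℝ O Γ) :
    (volume (convexHull ℝ ({O₁, O₂, M₂, M₁} : Set (EuclideanSpace ℝ (Fin 2))))).toReal =
      (dist B Γ) ^ 4 / (16 * dist A Γ * dist A B) := by
  have hu : B - A ≠ 0 := sub_ne_zero.2 hAB.symm
  have hv : Γ - A ≠ 0 := sub_ne_zero.2 hAΓ.symm
  have hO₁ := sub_eq_of_dist_eq_of_eq_midpoint finrank_euclideanSpace_fin hAB.symm hAΓ.symm
    hright hO hM₁ h1 h1'
  have hO₂ := sub_eq_of_dist_eq_of_eq_midpoint finrank_euclideanSpace_fin hAΓ.symm hAB.symm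
    (by rwa [real_inner_comm]) (hO.trans (midpoint_comm B Γ)) hM₂ h2 h2'
  have hM : M₂ - M₁ = (1 / 2 : ℝ) • ((Γ - A) - (B - A)) := by
    rw [hM₁, hM₂, hO, midpoint_eq_smul_add, midpoint_eq_smul_add, midpoint_eq_smul_add,
      invOf_eq_inv]
    module
  set c := ‖Γ - A‖ ^ 2 / ‖B - A‖ ^ 2
  have hO₂₁ : O₂ - M₂ = c • (O₁ - M₁) := by
    rw [hO₂, hO₁]
    simp only [c]
    match_scalars <;> field_simp [hu, hv]
    ring
  have hvertices : ({O₁, O₂, M₂, M₁} : Set (EuclideanSpace ℝ (Fin 2))) =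
      {M₁ + (O₁ - M₁), M₁ + (M₂ - M₁) + c • (O₁ - M₁), M₁ + (M₂ - M₁), M₁} := by
    rw [← hO₂₁]; simp only [add_sub_cancel]
  have hperp : ⟪M₂ - M₁, O₁ - M₁⟫ = 0 := by
    rw [hM, hO₁, inner_smul_left, inner_smul_right,
      inner_sub_add_div_smul_of_inner_eq_zero hright hv, mul_zero, mul_zero]
  have hpyth := norm_sub_sq_eq_norm_sq_add_norm_sq_real (real_inner_comm (B - A) (Γ - A) ▸ hright)
  rw [hvertices, volume_convexHull_trapezoid _ _ _ (by positivity) hperp,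
    ENNReal.toReal_ofReal (by positivity), hM, hO₁, norm_smul, norm_smul,
    norm_add_div_smul_of_inner_eq_zero hright hv]
  simp only [dist_eq_norm', sub_sub_sub_cancel_right, c] at hpyth ⊢
  norm_num
  field_simp [hu, hv]
  linear_combination (-16 * ‖Γ - B‖ ^ 2) * hpyth
end

section
/- The reciprocals of the two circumradii satisfy (1 / dist O O₁)² + (1 / dist O O₂)² = (4 / α)², where α = dist B Γ; i.e., there is a right triangle with legs 1/R₁, 1/R₂ and hypotenuse 1/(α/4). -/
/-! Put the right angle `A` at the origin, `u = B - A`, `v = Γ - A`. The centre `x` of the circle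
through `A`, `B` and the midpoint `O` of `BΓ` satisfies `⟪u, x⟫ = ‖u‖² / 2` and
`⟪v, x⟫ = (‖v‖² - ‖u‖²) / 4`. Expanding `x` in the orthogonal basis `u, v` of the plane gives
`R₁² = ‖x‖² = α⁴ / (16 ‖v‖²)`, and symmetrically `R₂² = α⁴ / (16 ‖u‖²)`; since
`‖u‖² + ‖v‖² = α²`, the reciprocals add up to `16 / α²`. -/

open EuclideanGeometry

open Module
open scoped RealInnerProductSpace

variable {V P : Type*} [NormedAddCommGroup V] [InnerProductSpace ℝ V] [MetricSpace P]
  [NormedAddTorsor V P]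

theorem inner_sq_add_inner_sq_of_inner_eq_zero [Fact (finrank ℝ V = 2)] {u v : V}
    (huv : ⟪u, v⟫ = 0) (x : V) :
    ‖v‖ ^ 2 * ⟪u, x⟫ ^ 2 + ‖u‖ ^ 2 * ⟪v, x⟫ ^ 2 = ‖u‖ ^ 2 * ‖v‖ ^ 2 * ‖x‖ ^ 2 := by
  rcases eq_or_ne u 0 with rfl | hu
  · simp
  have : FiniteDimensional ℝ V := .of_fact_finrank_eq_two
  -- `o.areaForm u x` is `‖u‖` times the coordinate of `x` along the line `ℝ v` orthogonal to `u`.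
  let o : Orientation ℝ V (Fin 2) := (finBasisOfFinrankEq ℝ V Fact.out).orientation
  have huv' := o.inner_sq_add_areaForm_sq u v
  have hux := o.inner_sq_add_areaForm_sq u x
  have hvx := o.inner_mul_inner_add_areaForm_mul_areaForm u v x
  rw [huv] at huv' hvx
  refine mul_left_cancel₀ (pow_ne_zero 2 (norm_ne_zero_iff.2 hu)) ?_
  linear_combination (‖u‖ ^ 2 * ‖v‖ ^ 2) * hux
    - (o.areaForm u v * o.areaForm u x + ‖u‖ ^ 2 * ⟪v, x⟫) * hvx + o.areaForm u x ^ 2 * huv'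

theorem dist_sq_eq_dist_sq_add_dist_sq_of_inner_vsub_eq_zero {A B C : P}
    (h : ⟪B -ᵥ A, C -ᵥ A⟫ = 0) : dist B C ^ 2 = dist A B ^ 2 + dist A C ^ 2 := by
  rw [dist_eq_norm_vsub V, ← vsub_sub_vsub_cancel_right B C A, norm_sub_sq_real, h,
    dist_comm A B, dist_comm A C, dist_eq_norm_vsub V, dist_eq_norm_vsub V]
  ring

theorem ne_of_inner_vsub_eq_zero {A B C : P} (hAB : A ≠ B) (h : ⟪B -ᵥ A, C -ᵥ A⟫ = 0) :
    B ≠ C := by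
  rintro rfl
  exact hAB (vsub_eq_zero_iff_eq.1 (inner_self_eq_zero.1 h)).symm

theorem sixteen_mul_norm_sq_mul_norm_sq_eq_of_norm_eq [Fact (finrank ℝ V = 2)] {u v x : V}
    (hu : u ≠ 0) (huv : ⟪u, v⟫ = 0) (hxu : ‖x‖ = ‖x - u‖) (hxm : ‖x‖ = ‖x - (2 : ℝ)⁻¹ • (u + v)‖) :
    16 * ‖v‖ ^ 2 * ‖x‖ ^ 2 = (‖u‖ ^ 2 + ‖v‖ ^ 2) ^ 2 := by
  have hux : ⟪u, x⟫ = ‖u‖ ^ 2 / 2 := by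
    have := congrArg (· ^ 2) hxu
    rw [norm_sub_sq_real, real_inner_comm u] at this
    linarith
  have hvx : ⟪v, x⟫ = (‖v‖ ^ 2 - ‖u‖ ^ 2) / 4 := by
    have := congrArg (· ^ 2) hxm
    rw [norm_sub_sq_real, inner_smul_right, inner_add_right, norm_smul, mul_pow, norm_add_sq_real,
      huv, real_inner_comm u, real_inner_comm v] at this
    norm_num at this
    linarith
  have hparseval := inner_sq_add_inner_sq_of_inner_eq_zero huv x
  rw [hux, hvx] at hparseval
  refine mul_left_cancel₀ (pow_ne_zero 2 (norm_ne_zero_iff.2 hu)) ?_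
  linear_combination (-16) * hparseval

theorem one_div_dist_midpoint_sq_eq_of_inner_vsub_eq_zero [Fact (finrank ℝ V = 2)]
    {A B C O₁ : P} (hAB : A ≠ B) (hright : ⟪B -ᵥ A, C -ᵥ A⟫ = 0)
    (hA : dist O₁ A = dist O₁ (midpoint ℝ B C)) (hB : dist O₁ (midpoint ℝ B C) = dist O₁ B) :
    (1 / dist (midpoint ℝ B C) O₁) ^ 2 = 16 * dist A C ^ 2 / dist B C ^ 4 := by
  have hM : midpoint ℝ B C -ᵥ A = (2 : ℝ)⁻¹ • ((B -ᵥ A) + (C -ᵥ A)) := by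
    rw [midpoint_vsub, invOf_eq_inv, smul_add]
  have key := sixteen_mul_norm_sq_mul_norm_sq_eq_of_norm_eq (x := O₁ -ᵥ A)
    (vsub_ne_zero.2 hAB.symm) hright
    (by rw [vsub_sub_vsub_cancel_right, ← dist_eq_norm_vsub, ← dist_eq_norm_vsub, hA, hB])
    (by rw [← hM, vsub_sub_vsub_cancel_right, ← dist_eq_norm_vsub, ← dist_eq_norm_vsub, hA])
  simp only [← dist_eq_norm_vsub] at key
  rw [dist_comm B A, dist_comm C A,
    ← dist_sq_eq_dist_sq_add_dist_sq_of_inner_vsub_eq_zero hright] at key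
  have hBC : dist B C ≠ 0 := dist_ne_zero.2 (ne_of_inner_vsub_eq_zero hAB hright)
  have hO₁A : dist O₁ A ≠ 0 := by
    rintro h
    rw [h] at key
    exact hBC (by simpa using key.symm)
  rw [dist_comm _ O₁, ← hA, div_pow, one_pow,
    div_eq_div_iff (pow_ne_zero 2 hO₁A) (pow_ne_zero 4 hBC)]
  linear_combination -key

theorem reciprocal_radii_pythagorean (A B Γ O O₁ O₂ : EuclideanSpace ℝ (Fin 2))
    (hAB : A ≠ B) (hAΓ : A ≠ Γ)
    (hright : inner ℝ (B - A) (Γ - A) = (0 : ℝ))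
    (hO : O = midpoint ℝ B Γ)
    (h1 : dist O₁ A = dist O₁ O) (h1' : dist O₁ O = dist O₁ B)
    (h2 : dist O₂ A = dist O₂ O) (h2' : dist O₂ O = dist O₂ Γ) :
    (1 / dist O O₁) ^ 2 + (1 / dist O O₂) ^ 2 = (4 / dist B Γ) ^ 2 := by
  have : Fact (finrank ℝ (EuclideanSpace ℝ (Fin 2)) = 2) := ⟨finrank_euclideanSpace_fin⟩
  have hB : ⟪B -ᵥ A, Γ -ᵥ A⟫ = 0 := hright
  have hΓ : ⟪Γ -ᵥ A, B -ᵥ A⟫ = 0 := by rwa [real_inner_comm]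
  have hpyth := dist_sq_eq_dist_sq_add_dist_sq_of_inner_vsub_eq_zero hB
  have hBΓ : dist B Γ ≠ 0 := dist_ne_zero.2 (ne_of_inner_vsub_eq_zero hAB hB)
  subst hO
  rw [midpoint_comm (R := ℝ) B Γ] at h2 h2'
  rw [one_div_dist_midpoint_sq_eq_of_inner_vsub_eq_zero hAB hB h1 h1', midpoint_comm,
    one_div_dist_midpoint_sq_eq_of_inner_vsub_eq_zero hAΓ hΓ h2 h2', dist_comm Γ B]
  field_simp
  linear_combination (-16) * hpyth
end

section
/- Let m > n be coprime positive integers of opposite parity and δ a positive integer, and consider the rational numbers R₁ = δ(m² + n²)² / (8mn), R₂ = δ(m² + n²)² / (4(m² − n²)), and L = δ(m² + n²)³ / (8mn(m² − n²)). Then all three of R₁, R₂, L are integers if and only if 8 * m * n * (m² − n²) divides δ. -/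
/-!
Put S = m² + n² and D = 8mn(m² − n²). Since m + n is odd, S is odd; since m, n are coprime, S is
coprime to m and n, hence also to m² − n² = S − 2n², and so to D. If L = δS³/D is an integer then
D ∣ δS³ and therefore D ∣ δ. Conversely, if D ∣ δ then the denominators 8mn and 4(m² − n²) of R₁
and R₂ also divide δ.
-/

theorem exists_intCast_eq_div_iff_dvd {a d : ℤ} (hd : d ≠ 0) :
    (∃ z : ℤ, (a : ℚ) / d = z) ↔ d ∣ a := by
  refine ⟨fun ⟨z, hz⟩ ↦ ⟨z, ?_⟩, fun ⟨z, hz⟩ ↦ ⟨z, ?_⟩⟩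
  · rw [div_eq_iff (by exact_mod_cast hd)] at hz
    exact_mod_cast hz.trans (mul_comm _ _)
  · rw [hz, Int.cast_mul, mul_div_cancel_left₀ _ (by exact_mod_cast hd)]

theorem Int.odd_sq_add_sq {m n : ℤ} (h : Odd (m + n)) : Odd (m ^ 2 + n ^ 2) := by
  rw [show m ^ 2 + n ^ 2 = (m + n) ^ 2 - 2 * (m * n) by ring]
  exact h.pow.sub_even (even_two_mul _)

theorem Int.isCoprime_sq_add_sq_mul_sq_sub_sq {m n : ℤ} (hcop : IsCoprime m n)
    (hpar : Odd (m + n)) : IsCoprime (m ^ 2 + n ^ 2) (8 * m * n * (m ^ 2 - n ^ 2)) := by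
  have h2 : IsCoprime (m ^ 2 + n ^ 2) 2 := Int.isCoprime_two_right.mpr (Int.odd_sq_add_sq hpar)
  have hmn : IsCoprime (m ^ 2 + n ^ 2) (m * n) := Int.isCoprime_of_sq_sum' hcop
  have hn : IsCoprime (m ^ 2 + n ^ 2) n := hmn.of_mul_right_right
  have hsub : IsCoprime (m ^ 2 + n ^ 2) (m ^ 2 - n ^ 2) := by
    rw [show m ^ 2 - n ^ 2 = -(2 * n ^ 2) + (m ^ 2 + n ^ 2) * 1 by ring]
    exact ((h2.mul_right hn.pow_right).neg_right).add_mul_left_right 1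
  rw [show 8 * m * n * (m ^ 2 - n ^ 2) = 2 ^ 3 * (m * n) * (m ^ 2 - n ^ 2) by ring]
  exact (h2.pow_right.mul_right hmn).mul_right hsub

theorem Int.integrality_iff_delta_divisible {m n δ : ℤ} (hm : m ≠ 0) (hn : n ≠ 0)
    (hmn : m ^ 2 - n ^ 2 ≠ 0) (hcop : IsCoprime m n) (hpar : Odd (m + n)) :
    ((∃ a : ℤ, (δ : ℚ) * ((m : ℚ) ^ 2 + (n : ℚ) ^ 2) ^ 2 / (8 * m * n) = a) ∧
     (∃ b : ℤ, (δ : ℚ) * ((m : ℚ) ^ 2 + (n : ℚ) ^ 2) ^ 2 / (4 * ((m : ℚ) ^ 2 - (n : ℚ) ^ 2)) = b) ∧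
     (∃ c : ℤ, (δ : ℚ) * ((m : ℚ) ^ 2 + (n : ℚ) ^ 2) ^ 3 /
        (8 * m * n * ((m : ℚ) ^ 2 - (n : ℚ) ^ 2)) = c)) ↔
    8 * m * n * (m ^ 2 - n ^ 2) ∣ δ := by
  have hR₁ := exists_intCast_eq_div_iff_dvd (a := δ * (m ^ 2 + n ^ 2) ^ 2) (d := 8 * m * n)
    (by simp [hm, hn])
  have hR₂ := exists_intCast_eq_div_iff_dvd (a := δ * (m ^ 2 + n ^ 2) ^ 2)
    (d := 4 * (m ^ 2 - n ^ 2)) (by simp [hmn])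
  have hL := exists_intCast_eq_div_iff_dvd (a := δ * (m ^ 2 + n ^ 2) ^ 3)
    (d := 8 * m * n * (m ^ 2 - n ^ 2)) (by simp [hm, hn, hmn])
  push_cast at hR₁ hR₂ hL
  rw [hR₁, hR₂, hL]
  refine ⟨fun ⟨_, _, h⟩ ↦ ?_, fun h ↦ ⟨?_, ?_, h.mul_right _⟩⟩
  · exact (Int.isCoprime_sq_add_sq_mul_sq_sub_sq hcop hpar).symm.pow_right.dvd_of_dvd_mul_right h
  · exact ((dvd_mul_right _ _).trans h).mul_right _
  · exact (Dvd.intro (2 * m * n) (by ring) |>.trans h).mul_right _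

theorem integrality_iff_delta_divisible (m n δ : ℕ) (hn : 0 < n) (hmn : n < m)
    (hcop : Nat.gcd m n = 1) (hpar : (m + n) % 2 = 1) :
    ((∃ a : ℤ, (δ : ℚ) * ((m : ℚ) ^ 2 + (n : ℚ) ^ 2) ^ 2 / (8 * m * n) = a) ∧
     (∃ b : ℤ, (δ : ℚ) * ((m : ℚ) ^ 2 + (n : ℚ) ^ 2) ^ 2 / (4 * ((m : ℚ) ^ 2 - (n : ℚ) ^ 2)) = b) ∧
     (∃ c : ℤ, (δ : ℚ) * ((m : ℚ) ^ 2 + (n : ℚ) ^ 2) ^ 3 /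
        (8 * m * n * ((m : ℚ) ^ 2 - (n : ℚ) ^ 2)) = c)) ↔
    8 * m * n * (m ^ 2 - n ^ 2) ∣ δ := by
  have hsq : n ^ 2 ≤ m ^ 2 := Nat.pow_le_pow_left hmn.le 2
  have := Int.integrality_iff_delta_divisible (m := m) (n := n) (δ := δ) (by omega) (by omega)
    (sub_ne_zero.mpr (by exact_mod_cast (Nat.pow_lt_pow_left hmn two_ne_zero).ne'))
    (Int.isCoprime_iff_gcd_eq_one.mpr (by exact_mod_cast hcop))
    (Int.odd_iff.mpr (by exact_mod_cast hpar))
  push_cast at this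
  rw [this, ← Int.natCast_dvd_natCast]
  push_cast [Nat.cast_sub hsq]
  rfl
end

section
/- (Pocklington) Every solution in positive integers of the Diophantine equation x⁴ − x²y² + y⁴ = z² satisfies x = y and z = x²; in particular, if additionally gcd(x, y) = 1 then x = y = z = 1. -/
lemma nat_sq_of_coprime {a b c : ℕ} (h : Nat.Coprime a b) (heq : a * b = c ^ 2) :
    ∃ a', a = a' ^ 2 := by
  apply exists_eq_pow_of_mul_eq_pow (α := ℕ) _ heq
  rwa [Nat.isUnit_iff]

lemma split4 {p q m n : ℕ} (hpq : Nat.Coprime p q) (hmn : Nat.Coprime m n)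
    (h : p * q = m * n) :
    p = Nat.gcd p m * Nat.gcd p n ∧ q = Nat.gcd q m * Nat.gcd q n ∧
    m = Nat.gcd p m * Nat.gcd q m ∧ n = Nat.gcd p n * Nat.gcd q n := by
  refine ⟨?_, ?_, ?_, ?_⟩
  · exact ((Nat.gcd_mul_gcd_eq_iff_dvd_mul_of_coprime hmn).2 ⟨q, by linarith⟩).symm
  · exact ((Nat.gcd_mul_gcd_eq_iff_dvd_mul_of_coprime hmn).2 ⟨p, by linarith [h]⟩).symm
  · rw [Nat.gcd_comm p m, Nat.gcd_comm q m]
    exact ((Nat.gcd_mul_gcd_eq_iff_dvd_mul_of_coprime hpq).2 ⟨n, by linarith⟩).symm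
  · rw [Nat.gcd_comm p n, Nat.gcd_comm q n]
    exact ((Nat.gcd_mul_gcd_eq_iff_dvd_mul_of_coprime hpq).2 ⟨m, by linarith [h]⟩).symm

lemma mod3_kill {a d c : ℕ} (hcop : Nat.Coprime a d)
    (h : a ^ 2 + d ^ 2 = 3 * c ^ 2) : False := by
  have h3 : ((a : ZMod 3)) ^ 2 + (d : ZMod 3) ^ 2 = 0 := by
    have := congrArg (Nat.cast : ℕ → ZMod 3) h
    push_cast at this
    rw [this, show ((3 : ZMod 3)) = 0 from by decide]
    ring
  have key : ∀ x y : ZMod 3, x ^ 2 + y ^ 2 = 0 → x = 0 ∧ y = 0 := by decide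
  obtain ⟨h1, h2⟩ := key _ _ h3
  rw [ZMod.natCast_eq_zero_iff] at h1 h2
  have : (3 : ℕ) ∣ Nat.gcd a d := Nat.dvd_gcd h1 h2
  rw [hcop] at this
  omega

lemma coprime_of_prime {x y : ℕ} (h : ∀ pp : ℕ, pp.Prime → pp ∣ x → pp ∣ y → False) :
    Nat.Coprime x y := by
  by_contra hg
  obtain ⟨pp, hpp, hdvd⟩ := Nat.exists_prime_and_dvd hg
  exact h pp hpp (hdvd.trans (Nat.gcd_dvd_left x y)) (hdvd.trans (Nat.gcd_dvd_right x y))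

lemma odd_sq8 {e : ℕ} (he : Odd e) : ∃ j, e ^ 2 = 8 * j + 1 := by
  obtain ⟨k, rfl⟩ := he
  obtain ⟨j, hj⟩ := Nat.even_mul_succ_self k
  refine ⟨j, ?_⟩
  have h1 : (2 * k + 1) ^ 2 = 4 * (k * (k + 1)) + 1 := by ring
  rw [h1, hj]
  ring

lemma pyth_param {f R s : ℕ} (hf : Odd f) (hcop : Nat.Coprime f R) (hR : 0 < R)
    (h : f ^ 2 + R ^ 2 = s ^ 2) :
    ∃ m n : ℕ, 0 < n ∧ m ^ 2 = f + n ^ 2 ∧ R = 2 * m * n ∧ s = m ^ 2 + n ^ 2 ∧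
      Nat.Coprime m n := by
  have hf1 : 0 < f := hf.pos
  have hs : 0 < s := by nlinarith
  have ht : PythagoreanTriple (f : ℤ) (R : ℤ) (s : ℤ) := by
    have : ((f : ℤ)) * f + R * R = s * s := by exact_mod_cast by nlinarith [h]
    exact this
  have hcop' : Int.gcd (f : ℤ) (R : ℤ) = 1 := by
    rwa [Int.gcd_natCast_natCast]
  have hpar : (f : ℤ) % 2 = 1 := by
    obtain ⟨k, hk⟩ := hf
    subst hk; push_cast; omega
  obtain ⟨m, n, h1, h2, h3, h4, -, h6⟩ :=
    ht.coprime_classification' hcop' hpar (by exact_mod_cast hs)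
  have hmn : 0 < m * n := by
    have : (0 : ℤ) < 2 * m * n := by rw [← h2]; exact_mod_cast hR
    linarith
  have hm : 0 < m := lt_of_le_of_ne h6 (by rintro rfl; simp at hmn)
  have hn : 0 < n := by
    rcases lt_trichotomy n 0 with h' | h' | h'
    · nlinarith
    · simp [h'] at hmn
    · exact h'
  refine ⟨m.toNat, n.toNat, by omega, ?_, ?_, ?_, ?_⟩
  · have : (m.toNat : ℤ) ^ 2 = (f : ℤ) + (n.toNat : ℤ) ^ 2 := by
      rw [Int.toNat_of_nonneg hm.le, Int.toNat_of_nonneg hn.le]; linarith [h1]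
    exact_mod_cast this
  · have : (R : ℤ) = 2 * (m.toNat : ℤ) * (n.toNat : ℤ) := by
      rw [Int.toNat_of_nonneg hm.le, Int.toNat_of_nonneg hn.le]; exact h2
    exact_mod_cast this
  · have : (s : ℤ) = (m.toNat : ℤ) ^ 2 + (n.toNat : ℤ) ^ 2 := by
      rw [Int.toNat_of_nonneg hm.le, Int.toNat_of_nonneg hn.le]; exact h3
    exact_mod_cast this
  · have := h4
    rw [Int.gcd] at this
    rwa [Nat.Coprime, ← Int.natAbs_of_nonneg hm.le, ← Int.natAbs_of_nonneg hn.le] at *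

set_option maxHeartbeats 1000000 in
/-- The concordant forms system `f²+R²=s²`, `f²+4R²=e²` has no positive coprime solutions. -/
lemma lemS (s : ℕ) : ∀ f R e : ℕ, 0 < f → 0 < R → Nat.Coprime f R →
    f ^ 2 + R ^ 2 = s ^ 2 → f ^ 2 + 4 * R ^ 2 = e ^ 2 → False := by
  induction s using Nat.strong_induction_on with
  | _ s IH =>
  intro f R e hf hR hcop h1 h2
  rcases Nat.even_or_odd f with hfe | hfo
  · -- f even : swap
    obtain ⟨F, hF⟩ : ∃ F, f = 2 * F := by obtain ⟨k, hk⟩ := hfe; exact ⟨k, by omega⟩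
    subst hF
    have hF0 : 0 < F := by omega
    have hee : Even e := by
      have : Even (e ^ 2) := by
        refine ⟨2 * F ^ 2 + 2 * R ^ 2, ?_⟩
        rw [← h2]; ring
      rw [Nat.even_pow] at this
      exact this.1
    obtain ⟨E, hE⟩ : ∃ E, e = 2 * E := by obtain ⟨k, hk⟩ := hee; exact ⟨k, by omega⟩
    subst hE
    have hcop' : Nat.Coprime R F := by
      have : Nat.gcd R F ∣ Nat.gcd (2 * F) R := Nat.dvd_gcd
        (Dvd.dvd.mul_left (Nat.gcd_dvd_right R F) 2) (Nat.gcd_dvd_left R F)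
      rw [hcop] at this
      exact Nat.eq_one_of_dvd_one this
    have hnew1 : R ^ 2 + F ^ 2 = E ^ 2 := by nlinarith [h2]
    have hnew2 : R ^ 2 + 4 * F ^ 2 = s ^ 2 := by nlinarith [h1]
    have hEs : E < s := by
      by_contra hcon
      push_neg at hcon
      nlinarith
    exact IH E hEs R F s hR hF0 hcop' hnew1 hnew2
  · -- f odd
    obtain ⟨m, n, hn0, hm2, hR2, hs, hcmn⟩ := pyth_param hfo hcop hR h1
    have hm0 : 0 < m := by
      rcases Nat.eq_zero_or_pos m with rfl | h
      · simp at hm2; omega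
      · exact h
    have hcop2 : Nat.Coprime f (2 * R) :=
      Nat.Coprime.mul_right (hfo.coprime_two_right) hcop
    have h2' : f ^ 2 + (2 * R) ^ 2 = e ^ 2 := by nlinarith [h2]
    obtain ⟨p, q, hq0, hp2, hpq2, he, hcpq⟩ := pyth_param hfo hcop2 (by omega) h2'
    have hp0 : 0 < p := by
      rcases Nat.eq_zero_or_pos p with rfl | h
      · simp at hp2; omega
      · exact h
    have hpqR : p * q = 2 * (m * n) := by
      have : 2 * (p * q) = 2 * (2 * (m * n)) := by rw [← mul_assoc, ← hpq2, hR2]; ring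
      omega
    rcases Nat.even_or_odd q with hqe | hqo
    · -- q even
      obtain ⟨Q, hQ⟩ : ∃ Q, q = 2 * Q := by obtain ⟨k, hk⟩ := hqe; exact ⟨k, by omega⟩
      have hQ0 : 0 < Q := by omega
      have hPQmn : p * Q = m * n := by
        have : 2 * (p * Q) = 2 * (m * n) := by rw [← hpqR, hQ]; ring
        omega
      have hcpQ : Nat.Coprime p Q := hcpq.coprime_dvd_right ⟨2, by omega⟩
      obtain ⟨e1, e2, e3, e4⟩ := split4 hcpQ hcmn hPQmn
      set a := Nat.gcd p m with hadef
      set b := Nat.gcd p n with hbdef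
      set cc := Nat.gcd Q m with hcdef
      set dd := Nat.gcd Q n with hddef
      have ha0 : 0 < a := Nat.pos_of_ne_zero (by rintro h0; rw [h0] at e1; omega)
      have hb0 : 0 < b := Nat.pos_of_ne_zero (by rintro h0; rw [h0] at e1; simp at e1; omega)
      have hcc0 : 0 < cc := Nat.pos_of_ne_zero (by rintro h0; rw [h0] at e2; omega)
      have hdd0 : 0 < dd := Nat.pos_of_ne_zero (by rintro h0; rw [h0] at e2; simp at e2; omega)
      have hkey0 : p ^ 2 + n ^ 2 = m ^ 2 + q ^ 2 := by linarith [hp2, hm2]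
      have key : b ^ 2 * (a ^ 2 + dd ^ 2) = cc ^ 2 * (a ^ 2 + 4 * dd ^ 2) := by
        rw [e1, e4, e3, hQ, e2] at hkey0
        zify at hkey0 ⊢
        linear_combination hkey0
      have hcbcc : Nat.Coprime cc b :=
        Nat.Coprime.coprime_dvd_left (Nat.gcd_dvd_right Q m)
          (Nat.Coprime.coprime_dvd_right (Nat.gcd_dvd_right p n) hcmn)
      have hccdvd : cc ^ 2 ∣ a ^ 2 + dd ^ 2 := by
        have hd : cc ^ 2 ∣ b ^ 2 * (a ^ 2 + dd ^ 2) := ⟨a ^ 2 + 4 * dd ^ 2, key⟩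
        exact (Nat.Coprime.pow 2 2 hcbcc).dvd_of_dvd_mul_left hd
      obtain ⟨t, ht⟩ := hccdvd
      have htb : b ^ 2 * t = a ^ 2 + 4 * dd ^ 2 := by
        have : cc ^ 2 * (b ^ 2 * t) = cc ^ 2 * (a ^ 2 + 4 * dd ^ 2) := by
          rw [← key, ht]; ring
        exact Nat.eq_of_mul_eq_mul_left (by positivity) this
      have hcad : Nat.Coprime a dd :=
        Nat.Coprime.coprime_dvd_left (Nat.gcd_dvd_right p m)
          (Nat.Coprime.coprime_dvd_right (Nat.gcd_dvd_right Q n) hcmn)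
      have ht3 : t ∣ 3 := by
        have td1 : t ∣ a ^ 2 + dd ^ 2 := ⟨cc ^ 2, by rw [ht]; ring⟩
        have td2 : t ∣ a ^ 2 + 4 * dd ^ 2 := ⟨b ^ 2, by rw [← htb]; ring⟩
        have td3 : t ∣ 3 * dd ^ 2 := by
          have := Nat.dvd_sub td2 td1
          have heq : a ^ 2 + 4 * dd ^ 2 - (a ^ 2 + dd ^ 2) = 3 * dd ^ 2 := by omega
          rwa [heq] at this
        have td4 : t ∣ 3 * a ^ 2 := by
          have h4 : t ∣ 4 * (a ^ 2 + dd ^ 2) := Dvd.dvd.mul_left td1 4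
          have := Nat.dvd_sub h4 td2
          have heq : 4 * (a ^ 2 + dd ^ 2) - (a ^ 2 + 4 * dd ^ 2) = 3 * a ^ 2 := by omega
          rwa [heq] at this
        have := Nat.dvd_gcd td4 td3
        rwa [Nat.gcd_mul_left, Nat.Coprime.pow 2 2 hcad, mul_one] at this
      rcases (Nat.dvd_prime Nat.prime_three).mp ht3 with rfl | rfl
      · -- t = 1 : descent
        rw [mul_one] at ht htb
        have hccs : cc < s := by
          have hccm : cc ≤ m := Nat.le_of_dvd hm0 (Nat.gcd_dvd_right Q m)
          have h1' : m ≤ m ^ 2 := Nat.le_self_pow two_ne_zero m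
          have h2' : 0 < n ^ 2 := pow_pos hn0 2
          omega
        exact IH cc hccs a dd b ha0 hdd0 hcad ht htb.symm
      · -- t = 3 : mod 3 contradiction
        exact mod3_kill hcad (by rw [ht]; ring)
    · -- q odd, so p even
      have hpe : Even p := by
        have : Even (p ^ 2) := by
          rw [hp2]
          rcases hfo with ⟨i, hi⟩
          rcases hqo with ⟨j, hj⟩
          exact ⟨i + (2 * j ^ 2 + 2 * j) + 1, by rw [hi, hj]; ring⟩
        rw [Nat.even_pow] at this
        exact this.1
      obtain ⟨P, hP⟩ : ∃ P, p = 2 * P := by obtain ⟨k, hk⟩ := hpe; exact ⟨k, by omega⟩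
      have hP0 : 0 < P := by omega
      have hPQmn : P * q = m * n := by
        have : 2 * (P * q) = 2 * (m * n) := by rw [← hpqR, hP]; ring
        omega
      have hcPq : Nat.Coprime P q := Nat.Coprime.coprime_dvd_left ⟨2, by omega⟩ hcpq
      obtain ⟨e1, e2, e3, e4⟩ := split4 hcPq hcmn hPQmn
      set a := Nat.gcd P m with hadef
      set b := Nat.gcd P n with hbdef
      set cc := Nat.gcd q m with hcdef
      set dd := Nat.gcd q n with hddef
      have ha0 : 0 < a := Nat.pos_of_ne_zero (by rintro h0; rw [h0] at e1; omega)
      have hb0 : 0 < b := Nat.pos_of_ne_zero (by rintro h0; rw [h0] at e1; simp at e1; omega)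
      have hcc0 : 0 < cc := Nat.pos_of_ne_zero (by rintro h0; rw [h0] at e2; omega)
      have hdd0 : 0 < dd := Nat.pos_of_ne_zero (by rintro h0; rw [h0] at e2; simp at e2; omega)
      have hkey0 : p ^ 2 + n ^ 2 = m ^ 2 + q ^ 2 := by linarith [hp2, hm2]
      have key : b ^ 2 * (4 * a ^ 2 + dd ^ 2) = cc ^ 2 * (a ^ 2 + dd ^ 2) := by
        rw [hP, e1, e4, e3, e2] at hkey0
        zify at hkey0 ⊢
        linear_combination hkey0
      have hcbcc : Nat.Coprime b cc :=
        Nat.Coprime.coprime_dvd_right (Nat.gcd_dvd_right q m)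
          (Nat.Coprime.coprime_dvd_left (Nat.gcd_dvd_right P n) hcmn.symm)
      have hbdvd : b ^ 2 ∣ a ^ 2 + dd ^ 2 := by
        have hd : b ^ 2 ∣ cc ^ 2 * (a ^ 2 + dd ^ 2) := ⟨4 * a ^ 2 + dd ^ 2, key.symm⟩
        exact (Nat.Coprime.pow 2 2 hcbcc).dvd_of_dvd_mul_left hd
      obtain ⟨t, ht⟩ := hbdvd
      have htc : cc ^ 2 * t = 4 * a ^ 2 + dd ^ 2 := by
        have : b ^ 2 * (cc ^ 2 * t) = b ^ 2 * (4 * a ^ 2 + dd ^ 2) := by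
          rw [key, ht]; ring
        exact Nat.eq_of_mul_eq_mul_left (by positivity) this
      have hcad : Nat.Coprime a dd :=
        Nat.Coprime.coprime_dvd_left (Nat.gcd_dvd_right P m)
          (Nat.Coprime.coprime_dvd_right (Nat.gcd_dvd_right q n) hcmn)
      have ht3 : t ∣ 3 := by
        have td1 : t ∣ a ^ 2 + dd ^ 2 := ⟨b ^ 2, by rw [ht]; ring⟩
        have td2 : t ∣ 4 * a ^ 2 + dd ^ 2 := ⟨cc ^ 2, by rw [← htc]; ring⟩
        have td3 : t ∣ 3 * a ^ 2 := by
          have := Nat.dvd_sub td2 td1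
          have heq : 4 * a ^ 2 + dd ^ 2 - (a ^ 2 + dd ^ 2) = 3 * a ^ 2 := by omega
          rwa [heq] at this
        have td4 : t ∣ 3 * dd ^ 2 := by
          have h4 : t ∣ 4 * (a ^ 2 + dd ^ 2) := Dvd.dvd.mul_left td1 4
          have := Nat.dvd_sub h4 td2
          have heq : 4 * (a ^ 2 + dd ^ 2) - (4 * a ^ 2 + dd ^ 2) = 3 * dd ^ 2 := by omega
          rwa [heq] at this
        have := Nat.dvd_gcd td3 td4
        rwa [Nat.gcd_mul_left, Nat.Coprime.pow 2 2 hcad, mul_one] at this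
      rcases (Nat.dvd_prime Nat.prime_three).mp ht3 with rfl | rfl
      · -- t = 1 : descent
        rw [mul_one] at ht htc
        have hbs : b < s := by
          have hbn : b ≤ n := Nat.le_of_dvd hn0 (Nat.gcd_dvd_right P n)
          have h1' : n ≤ n ^ 2 := Nat.le_self_pow two_ne_zero n
          have h2' : 0 < m ^ 2 := pow_pos hm0 2
          omega
        refine IH b hbs dd a cc hdd0 ha0 hcad.symm (by linarith [ht]) (by linarith [htc])
      · -- t = 3
        exact mod3_kill hcad (by rw [ht]; ring)



lemma factor3 {a c W : ℕ} (ha : Odd a) (hcop3 : ∀ pp : ℕ, pp.Prime → pp ∣ (2*c - W) → pp ∣ (2*c + W) → False)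
    (hWlt : W < 2*c) (hprod : (2*c - W) * (2*c + W) = 3 * a ^ 4) :
    ∃ e f : ℕ, Odd e ∧ Odd f ∧ 0 < e ∧ 0 < f ∧ Nat.Coprime e f ∧ e * f = a ∧
      ((2*c - W = e^4 ∧ 2*c + W = 3*f^4) ∨ (2*c - W = 3*f^4 ∧ 2*c + W = e^4)) := by
  have hg : Nat.Coprime (2*c - W) (2*c + W) := coprime_of_prime hcop3
  have h3 : (3:ℕ) ∣ (2*c - W) * (2*c + W) := ⟨a^4, hprod⟩
  have ha0 : 0 < a := ha.pos
  rcases (Nat.Prime.dvd_mul Nat.prime_three).mp h3 with h3d | h3d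
  · obtain ⟨K, hK⟩ := h3d
    have hKP : K * (2*c + W) = a ^ 4 := by
      have : 3 * (K * (2*c + W)) = 3 * a ^ 4 := by rw [← hprod, hK]; ring
      omega
    have hcKP : Nat.Coprime K (2*c + W) := Nat.Coprime.coprime_dvd_left ⟨3, by omega⟩ hg
    have ha4 : K * (2*c + W) = (a^2) ^ 2 := by rw [hKP]; ring
    obtain ⟨u, hu⟩ := nat_sq_of_coprime hcKP ha4
    obtain ⟨v, hv⟩ := nat_sq_of_coprime hcKP.symm (by rw [← ha4]; ring)
    have huv : u * v = a ^ 2 := by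
      have : (u*v)^2 = (a^2)^2 := by rw [← ha4, hu, hv]; ring
      exact Nat.pow_left_injective (by omega) this
    have hcuv : Nat.Coprime u v := by
      have := hcKP
      rw [hu, hv] at this
      exact (Nat.coprime_pow_left_iff (by omega) _ _).mp ((Nat.coprime_pow_right_iff (by omega) _ _).mp this)
    obtain ⟨f, hf⟩ := nat_sq_of_coprime hcuv huv
    obtain ⟨e, he⟩ := nat_sq_of_coprime hcuv.symm (by rw [← huv]; ring)
    have hef : e * f = a := by
      have : (e*f)^2 = a^2 := by rw [← huv, hf, he]; ring
      exact Nat.pow_left_injective (by omega) this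
    have hodd : Odd e ∧ Odd f := by
      rw [← Nat.odd_mul, hef]; exact ha
    refine ⟨e, f, hodd.1, hodd.2, hodd.1.pos, hodd.2.pos, ?_, hef, Or.inr ⟨?_, ?_⟩⟩
    · have := hcuv.symm
      rw [hf, he] at this
      exact (Nat.coprime_pow_left_iff (by omega) _ _).mp ((Nat.coprime_pow_right_iff (by omega) _ _).mp this)
    · rw [hK, hu, hf]; ring
    · rw [hv, he]; ring
  · obtain ⟨K, hK⟩ := h3d
    have hKP : (2*c - W) * K = a ^ 4 := by
      have : 3 * ((2*c - W) * K) = 3 * a ^ 4 := by rw [← hprod, hK]; ring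
      omega
    have hcKP : Nat.Coprime (2*c - W) K := Nat.Coprime.coprime_dvd_right ⟨3, by omega⟩ hg
    have ha4 : (2*c - W) * K = (a^2) ^ 2 := by rw [hKP]; ring
    obtain ⟨u, hu⟩ := nat_sq_of_coprime hcKP ha4
    obtain ⟨v, hv⟩ := nat_sq_of_coprime hcKP.symm (by rw [← ha4]; ring)
    have huv : u * v = a ^ 2 := by
      have : (u*v)^2 = (a^2)^2 := by rw [← ha4, hu, hv]; ring
      exact Nat.pow_left_injective (by omega) this
    have hcuv : Nat.Coprime u v := by
      have := hcKP
      rw [hu, hv] at this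
      exact (Nat.coprime_pow_left_iff (by omega) _ _).mp ((Nat.coprime_pow_right_iff (by omega) _ _).mp this)
    obtain ⟨e, he⟩ := nat_sq_of_coprime hcuv huv
    obtain ⟨f, hf⟩ := nat_sq_of_coprime hcuv.symm (by rw [← huv]; ring)
    have hef : e * f = a := by
      have : (e*f)^2 = a^2 := by rw [← huv, he, hf]; ring
      exact Nat.pow_left_injective (by omega) this
    have hodd : Odd e ∧ Odd f := by
      rw [← Nat.odd_mul, hef]; exact ha
    refine ⟨e, f, hodd.1, hodd.2, hodd.1.pos, hodd.2.pos, ?_, hef, Or.inl ⟨?_, ?_⟩⟩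
    · have := hcuv
      rw [he, hf] at this
      exact (Nat.coprime_pow_left_iff (by omega) _ _).mp ((Nat.coprime_pow_right_iff (by omega) _ _).mp this)
    · rw [hu, he]; ring
    · rw [hK, hv, hf]; ring

lemma kill16 {e f b : ℤ} (he : Odd e) (hf : Odd f) (hb : Even b)
    (h : 4 * b ^ 2 = (e ^ 2 + f ^ 2) * (3 * f ^ 2 - e ^ 2)) : False := by
  obtain ⟨i, rfl⟩ := he
  obtain ⟨j, rfl⟩ := hf
  obtain ⟨k, rfl⟩ := hb
  have key : ∀ x y z : ZMod 16,
      4 * (z + z) ^ 2 ≠ ((2 * x + 1) ^ 2 + (2 * y + 1) ^ 2) * (3 * (2 * y + 1) ^ 2 - (2 * x + 1) ^ 2) := by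
    decide
  have := congrArg (Int.cast : ℤ → ZMod 16) h
  push_cast at this
  exact key i j k this

set_option maxHeartbeats 1000000 in
lemma caseA {a b c : ℕ} (ha : Odd a) (hb : Even b) (hb0 : 0 < b) (hc0 : 0 < c)
    (hcop : Nat.Coprime a b) (h : a ^ 4 + b ^ 4 = c ^ 2 + a ^ 2 * b ^ 2) : False := by
  have ha0 : 0 < a := ha.pos
  have hZ : (a:ℤ)^4 + (b:ℤ)^4 = (c:ℤ)^2 + (a:ℤ)^2*(b:ℤ)^2 := by exact_mod_cast h
  set w : ℤ := (a:ℤ)^2 - 2*(b:ℤ)^2 with hw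
  have hw4 : 4*(c:ℤ)^2 = 3*(a:ℤ)^4 + w^2 := by rw [hw]; linear_combination -4*hZ
  have hwodd : Odd w := by
    obtain ⟨i, hi⟩ := ha
    have hai : (a:ℤ) = 2*(i:ℤ)+1 := by rw [hi]; push_cast; ring
    exact ⟨2*(i:ℤ)^2+2*(i:ℤ)-(b:ℤ)^2, by rw [hw, hai]; ring⟩
  set W : ℕ := w.natAbs with hWdef
  have hWZ : ((W:ℤ))^2 = w^2 := by
    rw [hWdef, ← Int.abs_eq_natAbs]
    exact sq_abs w
  have hW2 : W^2 + 3*a^4 = 4*c^2 := by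
    have : ((W:ℤ))^2 + 3*(a:ℤ)^4 = 4*(c:ℤ)^2 := by linear_combination hWZ - hw4
    exact_mod_cast this
  have hWodd : Odd W := Int.natAbs_odd.mpr hwodd
  have hWlt : W < 2*c := by
    by_contra hcon
    push_neg at hcon
    have h1 : (2*c)^2 ≤ W^2 := Nat.pow_le_pow_left hcon 2
    nlinarith [hW2, pow_pos ha0 4]
  have hW2' : ((W:ℤ))^2 + 3*(a:ℤ)^4 = 4*(c:ℤ)^2 := by exact_mod_cast hW2
  have hcastsub : ((2*c - W : ℕ):ℤ) = 2*(c:ℤ) - (W:ℤ) := by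
    rw [Nat.cast_sub hWlt.le]; push_cast; ring
  have hprod : (2*c - W) * (2*c + W) = 3 * a ^ 4 := by
    have : ((2*c - W : ℕ):ℤ) * ((2*c + W : ℕ):ℤ) = 3*(a:ℤ)^4 := by
      rw [hcastsub]; push_cast; linear_combination -hW2'
    exact_mod_cast this
  have hcop3 : ∀ pp : ℕ, pp.Prime → pp ∣ (2*c - W) → pp ∣ (2*c + W) → False := by
    intro pp hpp hd1 hd2
    have hWm2 : W % 2 = 1 := Nat.odd_iff.mp hWodd
    have hc4 : pp ∣ 4*c := by
      have := dvd_add hd1 hd2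
      rwa [show (2*c-W)+(2*c+W) = 4*c by omega] at this
    have hW2d : pp ∣ 2*W := by
      have := Nat.dvd_sub hd2 hd1
      rwa [show (2*c+W)-(2*c-W) = 2*W by omega] at this
    have hpodd : pp ≠ 2 := by
      rintro rfl
      obtain ⟨t, ht⟩ := hd1
      omega
    have hp2 : ¬ (pp ∣ 2) := fun hdd => hpodd ((Nat.prime_dvd_prime_iff_eq hpp Nat.prime_two).mp hdd)
    have hpc : pp ∣ c := by
      rcases (hpp.dvd_mul).mp hc4 with h4 | hcd
      · exact absurd ((hpp.dvd_mul).mp (show pp ∣ 2*2 from by simpa [show (4:ℕ)=2*2 by norm_num] using h4))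
          (by rintro (h'|h') <;> exact hp2 h')
      · exact hcd
    have hpW : pp ∣ W := by
      rcases (hpp.dvd_mul).mp hW2d with h2 | h2
      · exact absurd h2 hp2
      · exact h2
    have hp3a : pp ∣ 3*a^4 := by rw [← hprod]; exact Dvd.dvd.mul_right hd1 _
    have hpa' : pp ∣ a := by
      rcases (hpp.dvd_mul).mp hp3a with h3 | ha4
      · have hpp3 : pp = 3 := (Nat.prime_dvd_prime_iff_eq hpp Nat.prime_three).mp h3
        subst hpp3
        have h94 : (9:ℕ) ∣ 4*c^2 := by
          obtain ⟨t, rfl⟩ := hpc; exact ⟨4*t^2, by ring⟩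
        have h9W : (9:ℕ) ∣ W^2 := by
          obtain ⟨t, htW⟩ := hpW; exact ⟨t^2, by rw [htW]; ring⟩
        have h9 : (9:ℕ) ∣ 3*a^4 := by
          have := Nat.dvd_sub h94 h9W
          rwa [show 4*c^2 - W^2 = 3*a^4 by omega] at this
        have h3a4 : (3:ℕ) ∣ a^4 := by
          obtain ⟨t, ht⟩ := h9; exact ⟨t, by omega⟩
        exact Nat.Prime.dvd_of_dvd_pow Nat.prime_three h3a4
      · exact hpp.dvd_of_dvd_pow ha4
    have hpb : pp ∣ b := by
      have hd1' : pp ∣ c^2 + a^2*b^2 :=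
        dvd_add (dvd_pow hpc (by omega)) (Dvd.dvd.mul_right (dvd_pow hpa' (by omega)) _)
      have hd2' : pp ∣ a^4 + b^4 := by rw [h]; exact hd1'
      have : pp ∣ b^4 := (Nat.dvd_add_right (dvd_pow hpa' (by omega))).mp hd2'
      exact hpp.dvd_of_dvd_pow this
    have hgd : pp ∣ Nat.gcd a b := Nat.dvd_gcd hpa' hpb
    rw [hcop] at hgd
    exact hpp.one_lt.ne' (Nat.eq_one_of_dvd_one hgd)
  obtain ⟨e, f, he, hf, he0, hf0, hcef, hef, hdisj⟩ := factor3 ha hcop3 hWlt hprod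
  have hefZ : (a:ℤ) = (e:ℤ)*(f:ℤ) := by exact_mod_cast hef.symm
  have hwcase : 2*w = (e:ℤ)^4 - 3*(f:ℤ)^4 ∨ 2*w = 3*(f:ℤ)^4 - (e:ℤ)^4 := by
    rcases hdisj with ⟨h1, h2⟩ | ⟨h1, h2⟩ <;> rcases Int.natAbs_eq w with hwW | hwW
    · -- 2c−W = e⁴, 2c+W = 3f⁴, w = W
      right
      have c1 : ((2*c - W:ℕ):ℤ) = (e:ℤ)^4 := by exact_mod_cast congrArg (Nat.cast : ℕ → ℤ) h1
      have c2 : ((2*c + W:ℕ):ℤ) = 3*(f:ℤ)^4 := by exact_mod_cast congrArg (Nat.cast : ℕ → ℤ) h2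
      rw [hcastsub] at c1
      push_cast at c2
      rw [← hWdef] at hwW
      rw [hwW]
      linear_combination c2 - c1
    · left
      have c1 : ((2*c - W:ℕ):ℤ) = (e:ℤ)^4 := by exact_mod_cast congrArg (Nat.cast : ℕ → ℤ) h1
      have c2 : ((2*c + W:ℕ):ℤ) = 3*(f:ℤ)^4 := by exact_mod_cast congrArg (Nat.cast : ℕ → ℤ) h2
      rw [hcastsub] at c1
      push_cast at c2
      rw [← hWdef] at hwW
      rw [hwW]
      linear_combination c1 - c2
    · -- 2c−W = 3f⁴, 2c+W = e⁴, w = W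
      left
      have c1 : ((2*c - W:ℕ):ℤ) = 3*(f:ℤ)^4 := by exact_mod_cast congrArg (Nat.cast : ℕ → ℤ) h1
      have c2 : ((2*c + W:ℕ):ℤ) = (e:ℤ)^4 := by exact_mod_cast congrArg (Nat.cast : ℕ → ℤ) h2
      rw [hcastsub] at c1
      push_cast at c2
      rw [← hWdef] at hwW
      rw [hwW]
      linear_combination c2 - c1
    · right
      have c1 : ((2*c - W:ℕ):ℤ) = 3*(f:ℤ)^4 := by exact_mod_cast congrArg (Nat.cast : ℕ → ℤ) h1
      have c2 : ((2*c + W:ℕ):ℤ) = (e:ℤ)^4 := by exact_mod_cast congrArg (Nat.cast : ℕ → ℤ) h2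
      rw [hcastsub] at c1
      push_cast at c2
      rw [← hWdef] at hwW
      rw [hwW]
      linear_combination c1 - c2
  rcases hwcase with hcase | hcase
  · -- 2w = e⁴ − 3f⁴ : parity kill
    rw [hw] at hcase
    have heq : 4*(b:ℤ)^2 = ((e:ℤ)^2 + (f:ℤ)^2) * (3*(f:ℤ)^2 - (e:ℤ)^2) := by
      linear_combination -hcase + 2*((a:ℤ)+(e:ℤ)*(f:ℤ))*hefZ
    exact kill16 ((Int.odd_coe_nat e).mpr he) ((Int.odd_coe_nat f).mpr hf)
      ((Int.even_coe_nat b).mpr hb) heq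
  · -- 2w = 3f⁴ − e⁴ : concordant system route
    rw [hw] at hcase
    have heq2 : 4*(b:ℤ)^2 = ((e:ℤ)^2 - (f:ℤ)^2) * ((e:ℤ)^2 + 3*(f:ℤ)^2) := by
      linear_combination -hcase + 2*((a:ℤ)+(e:ℤ)*(f:ℤ))*hefZ
    have hbZ : (0:ℤ) < (b:ℤ) := by exact_mod_cast hb0
    have hltZ : (f:ℤ)^2 < (e:ℤ)^2 := by nlinarith [heq2, pow_pos hbZ 2, sq_nonneg ((e:ℤ) + f), sq_nonneg ((e:ℤ) - f)]
    have hlt : f^2 < e^2 := by exact_mod_cast hltZ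
    obtain ⟨D, hD⟩ : ∃ D, e^2 = f^2 + D := ⟨e^2 - f^2, by omega⟩
    have hD0 : 0 < D := by omega
    have hDZ : (D:ℤ) = (e:ℤ)^2 - (f:ℤ)^2 := by
      have := congrArg (Nat.cast : ℕ → ℤ) hD
      push_cast at this
      linarith
    have hbD : 4*b^2 = D*(e^2+3*f^2) := by
      have : 4*(b:ℤ)^2 = (D:ℤ)*((e:ℤ)^2+3*(f:ℤ)^2) := by rw [hDZ]; linear_combination heq2
      exact_mod_cast this
    obtain ⟨i, hi⟩ := odd_sq8 he
    obtain ⟨j, hj⟩ := odd_sq8 hf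
    set C := 2*i+6*j+1 with hCdef
    have hC : e^2 + 3*f^2 = 4*C := by rw [hi, hj, hCdef]; ring
    have hb2DC : b^2 = D*C := by
      refine Nat.eq_of_mul_eq_mul_left (show 0 < 4 by norm_num) ?_
      rw [hbD, hC]; ring
    have hcopDC : Nat.Coprime D C := by
      apply coprime_of_prime
      intro pp hpp hdD hdC
      have hppodd : pp ≠ 2 := by
        rintro rfl
        obtain ⟨t, ht⟩ := hdC
        omega
      have hp2 : ¬ (pp ∣ 2) := fun hdd => hppodd ((Nat.prime_dvd_prime_iff_eq hpp Nat.prime_two).mp hdd)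
      have hdef2 : pp ∣ e^2+3*f^2 := by rw [hC]; exact Dvd.dvd.mul_left hdC 4
      have hd4f : pp ∣ 4*f^2 := by
        have := Nat.dvd_sub hdef2 hdD
        rwa [show e^2+3*f^2 - D = 4*f^2 by omega] at this
      have hpf : pp ∣ f := by
        rcases (hpp.dvd_mul).mp hd4f with h4 | hf2
        · exact absurd ((hpp.dvd_mul).mp (show pp ∣ 2*2 from by simpa [show (4:ℕ)=2*2 by norm_num] using h4))
            (by rintro (h'|h') <;> exact hp2 h')
        · exact hpp.dvd_of_dvd_pow hf2
      have hpe : pp ∣ e := by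
        have : pp ∣ e^2 := by rw [hD]; exact dvd_add (dvd_pow hpf (by omega)) hdD
        exact hpp.dvd_of_dvd_pow this
      have hgd : pp ∣ Nat.gcd e f := Nat.dvd_gcd hpe hpf
      rw [hcef] at hgd
      exact hpp.one_lt.ne' (Nat.eq_one_of_dvd_one hgd)
    obtain ⟨r, hr⟩ := nat_sq_of_coprime hcopDC hb2DC.symm
    obtain ⟨s2, hs2⟩ := nat_sq_of_coprime hcopDC.symm (by rw [mul_comm]; exact hb2DC.symm)
    have hDeven : D % 2 = 0 := by omega
    have hreven : Even r := by
      rcases Nat.even_or_odd r with h' | h'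
      · exact h'
      · exfalso
        obtain ⟨k, hk⟩ := odd_sq8 h'
        omega
    obtain ⟨R, hRr⟩ := hreven
    have hD4 : D = 4*R^2 := by rw [hr, hRr]; ring
    have hR0 : 0 < R := by
      rcases Nat.eq_zero_or_pos R with rfl | h'
      · simp at hD4; omega
      · exact h'
    have hsys2 : f^2 + 4*R^2 = e^2 := by omega
    have hsys1 : f^2 + R^2 = s2^2 := by omega
    have hcopfR : Nat.Coprime f R := by
      apply coprime_of_prime
      intro pp hpp hdf hdR
      have hpe : pp ∣ e := by
        have : pp ∣ e^2 := by
          rw [← hsys2]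
          exact dvd_add (dvd_pow hdf (by omega)) (Dvd.dvd.mul_left (dvd_pow hdR (by omega)) 4)
        exact hpp.dvd_of_dvd_pow this
      have hgd : pp ∣ Nat.gcd e f := Nat.dvd_gcd hpe hdf
      rw [hcef] at hgd
      exact hpp.one_lt.ne' (Nat.eq_one_of_dvd_one hgd)
    exact lemS s2 f R e hf.pos hR0 hcopfR hsys1 hsys2



set_option maxHeartbeats 1000000 in
lemma lemQ (c : ℕ) : ∀ a b : ℕ, 0 < a → 0 < b → 0 < c → Nat.Coprime a b →
    a ^ 4 + b ^ 4 = c ^ 2 + a ^ 2 * b ^ 2 → a = b := by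
  induction c using Nat.strong_induction_on with
  | _ c IH =>
  intro a b ha0 hb0 hc0 hcop h
  by_cases hab : a = b
  · exact hab
  exfalso
  rcases Nat.even_or_odd a with hae | hao
  · rcases Nat.even_or_odd b with hbe | hbo
    · obtain ⟨i, hi⟩ := hae
      obtain ⟨j, hj⟩ := hbe
      have h2 : (2:ℕ) ∣ Nat.gcd a b := Nat.dvd_gcd ⟨i, by omega⟩ ⟨j, by omega⟩
      rw [hcop] at h2
      omega
    · exact caseA hbo hae ha0 hc0 hcop.symm
        (by rw [Nat.add_comm (b^4) (a^4), mul_comm (b^2) (a^2)]; exact h)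
  · rcases Nat.even_or_odd b with hbe | hbo
    · exact caseA hao hbe hb0 hc0 hcop h
    · -- both odd : descent
      have hcZ : (a:ℤ)^4 + (b:ℤ)^4 = (c:ℤ)^2 + (a:ℤ)^2*(b:ℤ)^2 := by exact_mod_cast h
      have ht : PythagoreanTriple ((a:ℤ)^2-(b:ℤ)^2) ((a:ℤ)*(b:ℤ)) (c:ℤ) := by
        have : ((a:ℤ)^2-(b:ℤ)^2)*((a:ℤ)^2-(b:ℤ)^2) + ((a:ℤ)*(b:ℤ))*((a:ℤ)*(b:ℤ))
            = (c:ℤ)*(c:ℤ) := by linear_combination hcZ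
        exact this
      have hab' : IsCoprime (a:ℤ) (b:ℤ) := by
        rw [Int.isCoprime_iff_gcd_eq_one, Int.gcd_natCast_natCast]; exact hcop
      have hIc : Int.gcd ((a:ℤ)^2-(b:ℤ)^2) ((a:ℤ)*(b:ℤ)) = 1 := by
        have c1 : IsCoprime ((a:ℤ)^2-(b:ℤ)^2) (a:ℤ) := by
          have hbp : IsCoprime ((b:ℤ)^2) (a:ℤ) := hab'.symm.pow_left
          have h2' := (hbp.neg_left).add_mul_left_left (a:ℤ)
          rw [show -(b:ℤ)^2 + (a:ℤ)*(a:ℤ) = (a:ℤ)^2-(b:ℤ)^2 by ring] at h2'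
          exact h2'
        have c2 : IsCoprime ((a:ℤ)^2-(b:ℤ)^2) (b:ℤ) := by
          have hap : IsCoprime ((a:ℤ)^2) (b:ℤ) := hab'.pow_left
          have h2' := hap.add_mul_left_left (-(b:ℤ))
          rw [show (a:ℤ)^2 + (b:ℤ)*(-(b:ℤ)) = (a:ℤ)^2-(b:ℤ)^2 by ring] at h2'
          exact h2'
        have := c1.mul_right c2
        rwa [Int.isCoprime_iff_gcd_eq_one] at this
      obtain ⟨m, n, hmn1, hmn2, hgcdmn, hpar⟩ := PythagoreanTriple.coprime_classification.mp ⟨ht, hIc⟩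
      rcases hmn1 with ⟨h1, h2⟩ | ⟨h1, h2⟩
      · -- a*b = 2*m*n : impossible since a*b odd
        have heven : Even ((a:ℤ)*(b:ℤ)) := ⟨m*n, by rw [h2]; ring⟩
        rw [Int.even_mul] at heven
        rcases heven with he | he
        · rw [Int.even_coe_nat] at he
          exact (Nat.not_even_iff_odd.mpr hao) he
        · rw [Int.even_coe_nat] at he
          exact (Nat.not_even_iff_odd.mpr hbo) he
      · rcases hmn2 with hz | hz
        swap
        · have : (0:ℤ) < (c:ℤ) := by exact_mod_cast hc0
          rw [hz] at this
          nlinarith [sq_nonneg m, sq_nonneg n]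
        -- c = m² + n²
        set M := m.natAbs with hMdef
        set N := n.natAbs with hNdef
        have e1 : ((M:ℤ))^2 = m^2 := by rw [hMdef, ← Int.abs_eq_natAbs]; exact sq_abs m
        have e2 : ((N:ℤ))^2 = n^2 := by rw [hNdef, ← Int.abs_eq_natAbs]; exact sq_abs n
        obtain ⟨i, hi⟩ := hao
        obtain ⟨j, hj⟩ := hbo
        obtain ⟨c2, hc2⟩ : ∃ c2, a^2 + b^2 = 2*c2 :=
          ⟨2*i^2+2*i+2*j^2+2*j+1, by rw [hi, hj]; ring⟩
        have hc2Z : (a:ℤ)^2 + (b:ℤ)^2 = 2*(c2:ℤ) := by exact_mod_cast hc2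
        have hcc : 4*(c2:ℤ)^2 = ((a:ℤ)^2+(b:ℤ)^2)^2 := by
          linear_combination (-(a:ℤ)^2-(b:ℤ)^2-2*(c2:ℤ))*hc2Z
        have hmn0 : m*n ≠ 0 := by
          intro h0
          apply hab
          have hz2 : (a:ℤ)^2 = (b:ℤ)^2 := by
            have : (a:ℤ)^2-(b:ℤ)^2 = 2*(m*n) := by rw [h1]; ring
            rw [h0] at this
            linarith
          have : a^2 = b^2 := by exact_mod_cast hz2
          exact Nat.pow_left_injective (by omega) this
        have hM0 : 0 < M := by
          rw [hMdef]
          rw [Int.natAbs_pos]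
          intro h0; rw [h0] at hmn0; simp at hmn0
        have hN0 : 0 < N := by
          rw [hNdef]
          rw [Int.natAbs_pos]
          intro h0; rw [h0] at hmn0; simp at hmn0
        have g4 : 4*((M:ℤ)^4 + (N:ℤ)^4) = 4*((c2:ℤ)^2 + (M:ℤ)^2*(N:ℤ)^2) := by
          have f1 : (M:ℤ)^4 = m^4 := by
            rw [show ((M:ℤ))^4 = (((M:ℤ))^2)^2 by ring, e1]; ring
          have f2 : (N:ℤ)^4 = n^4 := by
            rw [show ((N:ℤ))^4 = (((N:ℤ))^2)^2 by ring, e2]; ring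
          rw [f1, f2, e1, e2]
          linear_combination -hcc - ((a:ℤ)^2-(b:ℤ)^2+2*m*n)*h1 - 4*((a:ℤ)*(b:ℤ)+m^2-n^2)*h2
        have hMN4 : M^4 + N^4 = c2^2 + M^2*N^2 := by
          have := mul_left_cancel₀ (show (4:ℤ) ≠ 0 by norm_num) g4
          exact_mod_cast this
        have hc20 : 0 < c2 := by
          have := pow_pos ha0 2
          omega
        have hcopMN : Nat.Coprime M N := hgcdmn
        have hc4Z : 4*(c:ℤ)^2 = ((a:ℤ)^2+(b:ℤ)^2)^2 + 12*(m*n)^2 := by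
          linear_combination -4*hcZ + (3*((a:ℤ)^2-(b:ℤ)^2)+3*(2*m*n))*h1
        have hc2c : c2 < c := by
          have hmnZ : (0:ℤ) < (m*n)^2 := by positivity
          have hsqlt : (c2:ℤ)^2 < (c:ℤ)^2 := by linarith [hcc, hc4Z, hmnZ]
          have hsq : c2^2 < c^2 := by exact_mod_cast hsqlt
          by_contra hcon
          push_neg at hcon
          exact absurd (Nat.pow_le_pow_left hcon 2) (by omega)
        have hMN := IH c2 hc2c M N hM0 hN0 hc20 hcopMN hMN4
        -- M = N gives a*b = 0
        have : (a:ℤ)*(b:ℤ) = 0 := by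
          rw [h2, ← e1, ← e2, hMN]
          ring
        have hab0 : a*b = 0 := by exact_mod_cast this
        have := Nat.mul_pos ha0 hb0
        omega



theorem pocklington_diophantine (x y z : ℕ) (hx : 0 < x) (hy : 0 < y) (hz : 0 < z)
    (h : x ^ 4 + y ^ 4 = z ^ 2 + x ^ 2 * y ^ 2) :
    (x = y ∧ z = x ^ 2) ∧ (Nat.gcd x y = 1 → x = 1 ∧ y = 1 ∧ z = 1) := by
  obtain ⟨a, ha⟩ := Nat.gcd_dvd_left x y
  obtain ⟨b, hb⟩ := Nat.gcd_dvd_right x y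
  set d := Nat.gcd x y with hd
  have hd0 : 0 < d := Nat.gcd_pos_of_pos_left _ hx
  have ha0 : 0 < a := by
    rcases Nat.eq_zero_or_pos a with rfl | h'
    · omega
    · exact h'
  have hb0 : 0 < b := by
    rcases Nat.eq_zero_or_pos b with rfl | h'
    · omega
    · exact h'
  have hcab : Nat.Coprime a b := by
    have h1 : a = x / d := by rw [ha]; rw [Nat.mul_div_cancel_left _ hd0]
    have h2 : b = y / d := by rw [hb]; rw [Nat.mul_div_cancel_left _ hd0]
    rw [h1, h2]
    exact Nat.coprime_div_gcd_div_gcd hd0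
  rw [ha, hb] at h
  have h' : d^4*(a^4+b^4) = z^2 + d^4*(a^2*b^2) := by
    have hZ := congrArg (Nat.cast : ℕ → ℤ) h
    push_cast at hZ
    have : (d:ℤ)^4*((a:ℤ)^4+(b:ℤ)^4) = (z:ℤ)^2 + (d:ℤ)^4*((a:ℤ)^2*(b:ℤ)^2) := by
      linear_combination hZ
    exact_mod_cast this
  have hdvd : d^4 ∣ z^2 := by
    have h1 : d^4 ∣ d^4*(a^4+b^4) := dvd_mul_right _ _
    have h2 : d^4 ∣ d^4*(a^2*b^2) := dvd_mul_right _ _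
    have h3 := Nat.dvd_sub h1 h2
    rwa [show d^4*(a^4+b^4) - d^4*(a^2*b^2) = z^2 by omega] at h3
  have hdz : d^2 ∣ z := by
    rw [← Nat.pow_dvd_pow_iff (two_ne_zero)]
    rwa [show (d^2)^2 = d^4 by ring]
  obtain ⟨cq, hcq⟩ := hdz
  have hcq0 : 0 < cq := by
    rcases Nat.eq_zero_or_pos cq with rfl | h'
    · omega
    · exact h'
  have heq : a^4 + b^4 = cq^2 + a^2*b^2 := by
    refine Nat.eq_of_mul_eq_mul_left (show 0 < d^4 by positivity) ?_
    rw [h', hcq]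
    ring
  have hab := lemQ cq a b ha0 hb0 hcq0 hcab heq
  subst hab
  have ha1 : a = 1 := by
    have := hcab
    rwa [Nat.Coprime, Nat.gcd_self] at this
  subst ha1
  have hcq2 : cq^2 = 1 := by simpa using heq
  have hcq1 : cq = 1 := by
    have hle := Nat.le_self_pow (two_ne_zero) cq
    omega
  have hxd : x = d := by omega
  constructor
  · refine ⟨by omega, ?_⟩
    rw [hcq, hcq1, hxd]
    ring
  · intro hgcd
    refine ⟨by omega, by omega, ?_⟩
    rw [hcq, hcq1, hgcd]
    norm_num
end

section
/- If m > n are coprime positive integers of opposite parity (m + n odd), then m⁴ + 14m²n² + n⁴ is not a perfect square; consequently Real.sqrt (m⁴ + 14m²n² + n⁴) is irrational. -/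
/-!
Put `a = m² - n²` and `b = 2mn`: these are coprime, `a² + b² = (m² + n²)²`, and
`a² + (2b)² = m⁴ + 14m²n² + n⁴`. So it suffices that for coprime `a, b > 0` the numbers
`a² + b²` and `a² + (2b)²` are never both squares, which is proved by descent on `ab`.
If `a` is even, `(b, a / 2)` is a smaller such pair. If `a` is odd, parametrising both
Pythagorean triangles gives `a = r² - s² = u² - v²` and `b = 2rs = uv`; say `v` is even. With
`g = gcd(u, r)`, `u = g u₁`, `r = g r₁` one finds `s = u₁ s₁`, `v = 2 r₁ s₁` and
`u₁² (g² + s₁²) = r₁² (g² + (2s₁)²)`. The two brackets are coprime (their gcd divides `3`, and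
`3 ∤ g² + s₁²`), so `g² + s₁² = r₁²` and `g² + (2s₁)² = u₁²`, and `(g, s₁)` is a smaller pair.
-/

namespace Nat

theorem not_three_dvd_sq_add_sq {a b : ℕ} (hab : a.Coprime b) : ¬ 3 ∣ a ^ 2 + b ^ 2 := by
  intro h3
  have hmod3 : ∀ x y : ZMod 3, x ^ 2 + y ^ 2 = 0 → x = 0 ∧ y = 0 := by decide
  have hzero : (a : ZMod 3) ^ 2 + (b : ZMod 3) ^ 2 = 0 := by
    exact_mod_cast (ZMod.natCast_eq_zero_iff _ 3).mpr h3
  obtain ⟨ha, hb⟩ := hmod3 _ _ hzero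
  rw [ZMod.natCast_eq_zero_iff] at ha hb
  exact Nat.not_coprime_of_dvd_of_dvd (by norm_num) ha hb hab

theorem dvd_three_of_dvd_sq_add_sq {a b d : ℕ} (hab : a.Coprime b) (h₁ : d ∣ a ^ 2 + b ^ 2)
    (h₂ : d ∣ a ^ 2 + (2 * b) ^ 2) : d ∣ 3 := by
  have ha : d ∣ 3 * a ^ 2 := by
    have h := Nat.dvd_sub (dvd_mul_of_dvd_right h₁ 4) h₂
    rwa [show 4 * (a ^ 2 + b ^ 2) - (a ^ 2 + (2 * b) ^ 2) = 3 * a ^ 2 from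
      Nat.sub_eq_of_eq_add (by ring)] at h
  have hb : d ∣ 3 * b ^ 2 := by
    have h := Nat.dvd_sub h₂ h₁
    rwa [show a ^ 2 + (2 * b) ^ 2 - (a ^ 2 + b ^ 2) = 3 * b ^ 2 from
      Nat.sub_eq_of_eq_add (by ring)] at h
  simpa [Nat.gcd_mul_left, (hab.pow 2 2).gcd_eq_one] using Nat.dvd_gcd ha hb

theorem coprime_sq_add_sq_sq_add_two_mul_sq {a b : ℕ} (hab : a.Coprime b) :
    (a ^ 2 + b ^ 2).Coprime (a ^ 2 + (2 * b) ^ 2) := by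
  have h3 : Nat.Coprime 3 (a ^ 2 + b ^ 2) :=
    (Nat.Prime.coprime_iff_not_dvd Nat.prime_three).mpr (not_three_dvd_sq_add_sq hab)
  exact Nat.eq_one_of_dvd_one <| h3 ▸ Nat.dvd_gcd
    (dvd_three_of_dvd_sq_add_sq hab (Nat.gcd_dvd_left _ _) (Nat.gcd_dvd_right _ _))
    (Nat.gcd_dvd_left _ _)

theorem eq_of_mul_eq_mul_of_coprime {u v x y : ℕ} (huv : u.Coprime v) (hxy : x.Coprime y)
    (h : u * x = v * y) : x = v ∧ y = u :=
  ⟨Nat.dvd_antisymm (hxy.dvd_of_dvd_mul_right ⟨u, by rw [← h]; ring⟩)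
      (huv.symm.dvd_of_dvd_mul_left ⟨y, h⟩),
    Nat.dvd_antisymm (hxy.symm.dvd_of_dvd_mul_right ⟨v, by rw [h]; ring⟩)
      (huv.dvd_of_dvd_mul_left ⟨x, h.symm⟩)⟩

theorem exists_of_sq_add_sq_eq_sq {x y z : ℕ} (h : x ^ 2 + y ^ 2 = z ^ 2) (hxy : x.Coprime y)
    (hx : Odd x) : ∃ r s : ℕ, r.Coprime s ∧ x + s ^ 2 = r ^ 2 ∧ y = 2 * r * s := by
  have hpt : PythagoreanTriple (x : ℤ) y z := by
    have h' : (x : ℤ) ^ 2 + y ^ 2 = z ^ 2 := by exact_mod_cast h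
    unfold PythagoreanTriple
    linear_combination h'
  have hz : (0 : ℤ) < z := by
    have : 0 < z ^ 2 := h ▸ by have := hx.pos; positivity
    exact_mod_cast Nat.pos_of_ne_zero (by rintro rfl; simp at this)
  obtain ⟨M, N, hxMN, hyMN, -, hMN, -, -⟩ := PythagoreanTriple.coprime_classification' hpt
    (Int.gcd_natCast_natCast x y ▸ hxy) (by exact_mod_cast Nat.odd_iff.mp hx) hz
  refine ⟨M.natAbs, N.natAbs, hMN, ?_, ?_⟩
  · zify
    rw [sq_abs, sq_abs, hxMN]
    ring
  · zify
    rw [← abs_two, ← abs_mul, ← abs_mul, ← hyMN, Nat.abs_cast]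

theorem coprime_sq_sub_sq_two_mul_mul {m n : ℕ} (hnm : n ≤ m) (hmn : m.Coprime n)
    (hpar : (m + n) % 2 = 1) : (m ^ 2 - n ^ 2).Coprime (2 * m * n) := by
  have hgcd := (PythagoreanTriple.coprime_classification (z := (m : ℤ) ^ 2 + n ^ 2).mpr
    ⟨m, n, Or.inl ⟨rfl, rfl⟩, Or.inl rfl, Int.gcd_natCast_natCast m n ▸ hmn, by omega⟩).2
  rw [Nat.Coprime, ← Int.gcd_natCast_natCast, Nat.cast_sub (Nat.pow_le_pow_left hnm 2)]
  exact_mod_cast hgcd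

end Nat

structure DoubledLegPair (a b : ℕ) : Prop where
  pos_left : 0 < a
  pos_right : 0 < b
  coprime : a.Coprime b
  sq_add_sq : ∃ c, a ^ 2 + b ^ 2 = c ^ 2
  sq_add_two_mul_sq : ∃ d, a ^ 2 + (2 * b) ^ 2 = d ^ 2

theorem exists_doubledLegPair_dvd_mul {p q m n : ℕ} (hm : 0 < m) (hn : 0 < n)
    (hpq : p.Coprime q) (hmn : m.Coprime n) (hsq : p ^ 2 + n ^ 2 = m ^ 2 + q ^ 2)
    (hmul : p * q = 2 * (m * n)) (hq : 2 ∣ q) :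
    ∃ a b, DoubledLegPair a b ∧ a * b ∣ m * n := by
  obtain ⟨Q, rfl⟩ := hq
  have hp : 0 < p := Nat.pos_of_ne_zero (by rintro rfl; simp at hmul; omega)
  obtain ⟨a, p₁, m₁, ha, hpm₁, rfl, rfl⟩ := Nat.exists_coprime' (Nat.gcd_pos_of_pos_left m hp)
  have hp₁ : 0 < p₁ := Nat.pos_of_mul_pos_right hp
  have hQ : p₁ * Q = m₁ * n :=
    Nat.eq_of_mul_eq_mul_left (by positivity : 0 < 2 * a) (by linarith [hmul])
  obtain ⟨n₁, rfl⟩ : p₁ ∣ n := hpm₁.dvd_of_dvd_mul_left ⟨Q, hQ.symm⟩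
  obtain rfl : Q = m₁ * n₁ := Nat.eq_of_mul_eq_mul_left hp₁ (by rw [hQ]; ring)
  have han₁ : a.Coprime n₁ := Nat.Coprime.coprime_dvd_right (dvd_mul_left n₁ p₁)
    (Nat.Coprime.coprime_dvd_left (dvd_mul_left a m₁) hmn)
  obtain ⟨hc, hd⟩ := Nat.eq_of_mul_eq_mul_of_coprime (hpm₁.pow 2 2)
    (Nat.coprime_sq_add_sq_sq_add_two_mul_sq han₁) (by linear_combination hsq)
  exact ⟨a, n₁, ⟨ha, Nat.pos_of_mul_pos_left hn, han₁, ⟨m₁, hc⟩, ⟨p₁, hd⟩⟩,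
    mul_dvd_mul (dvd_mul_left a m₁) (dvd_mul_left n₁ p₁)⟩

namespace DoubledLegPair

theorem swap_half {a b : ℕ} (h : DoubledLegPair (2 * a) b) : DoubledLegPair b a := by
  obtain ⟨ha, hb, hab, ⟨c, hc⟩, ⟨d, hd⟩⟩ := h
  obtain ⟨d', rfl⟩ : 2 ∣ d := by
    rw [← Nat.pow_dvd_pow_iff two_ne_zero, ← hd]
    exact ⟨a ^ 2 + b ^ 2, by ring⟩
  exact ⟨hb, by omega, (Nat.Coprime.coprime_dvd_left (dvd_mul_left a 2) hab).symm,
    ⟨d', by linarith⟩, ⟨c, by linarith⟩⟩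

theorem exists_lt_mul_of_odd {a b : ℕ} (h : DoubledLegPair a b) (ha : Odd a) :
    ∃ a' b', DoubledLegPair a' b' ∧ a' * b' < a * b := by
  obtain ⟨-, hb, hab, ⟨c, hc⟩, ⟨d, hd⟩⟩ := h
  obtain ⟨r, s, hrs, har, rfl⟩ := Nat.exists_of_sq_add_sq_eq_sq hc hab ha
  obtain ⟨u, v, huv, hau, hbuv⟩ := Nat.exists_of_sq_add_sq_eq_sq hd
    (Nat.Coprime.mul_right (Nat.coprime_two_right.mpr ha) hab) ha
  have huv_mul : u * v = 2 * (r * s) := by linarith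
  have hrs_pos : 0 < r * s := by rw [mul_assoc] at hb; omega
  have hr0 : 0 < r := Nat.pos_of_mul_pos_right hrs_pos
  have hs0 : 0 < s := Nat.pos_of_mul_pos_left hrs_pos
  suffices ∃ a' b', DoubledLegPair a' b' ∧ a' * b' ∣ r * s by
    obtain ⟨a', b', hab', hdvd⟩ := this
    refine ⟨a', b', hab', (Nat.le_of_dvd hrs_pos hdvd).trans_lt ?_⟩
    nlinarith [ha.pos]
  rcases (Nat.Prime.dvd_mul Nat.prime_two).mp ⟨r * s, huv_mul⟩ with hu2 | hv2
  · rw [mul_comm r s]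
    exact exists_doubledLegPair_dvd_mul hs0 hr0 huv.symm hrs.symm (by omega) (by linarith) hu2
  · exact exists_doubledLegPair_dvd_mul hr0 hs0 huv hrs (by omega) huv_mul hv2

end DoubledLegPair

theorem not_doubledLegPair (a b : ℕ) : ¬ DoubledLegPair a b := by
  induction h : a * b using Nat.strong_induction_on generalizing a b with
  | _ N ih =>
    intro hab
    rcases Nat.even_or_odd' a with ⟨a', rfl | rfl⟩
    · exact ih (b * a') (by nlinarith [hab.pos_left, hab.pos_right]) b a' rfl hab.swap_half
    · obtain ⟨a'', b'', h', hlt⟩ := hab.exists_lt_mul_of_odd (odd_two_mul_add_one a')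
      exact ih _ (h ▸ hlt) a'' b'' rfl h'

theorem d₁_irrational (m n : ℕ) (hn : 0 < n) (hmn : n < m)
    (hcop : Nat.gcd m n = 1) (hpar : (m + n) % 2 = 1) :
    (¬ ∃ k : ℕ, m ^ 4 + 14 * m ^ 2 * n ^ 2 + n ^ 4 = k ^ 2) ∧
    Irrational (Real.sqrt ((m : ℝ) ^ 4 + 14 * (m : ℝ) ^ 2 * (n : ℝ) ^ 2 + (n : ℝ) ^ 4)) := by
  have hm : 0 < m := hn.trans hmn
  have hsq : n ^ 2 < m ^ 2 := Nat.pow_lt_pow_left hmn two_ne_zero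
  have hnot : ¬ ∃ k : ℕ, m ^ 4 + 14 * m ^ 2 * n ^ 2 + n ^ 4 = k ^ 2 := by
    rintro ⟨k, hk⟩
    refine not_doubledLegPair (m ^ 2 - n ^ 2) (2 * m * n)
      ⟨Nat.sub_pos_of_lt hsq, by positivity, Nat.coprime_sq_sub_sq_two_mul_mul hmn.le hcop hpar,
        ⟨m ^ 2 + n ^ 2, ?_⟩, ⟨k, ?_⟩⟩ <;> zify [hsq.le] at hk ⊢
    · ring
    · linear_combination hk
  refine ⟨hnot, ?_⟩
  have h : Irrational √((m ^ 4 + 14 * m ^ 2 * n ^ 2 + n ^ 4 : ℕ) : ℝ) :=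
    irrational_sqrt_natCast_iff.mpr fun ⟨r, hr⟩ => hnot ⟨r, by rw [hr, sq]⟩
  exact_mod_cast h
end

section
/- If m > n are coprime positive integers of opposite parity (m + n odd), then m⁴ − m²n² + n⁴ is not a perfect square; consequently Real.sqrt (m⁴ − m²n² + n⁴) is irrational. -/
/-!
Infinite descent on `|Z|` in `p⁴ - p²q² + q⁴ = Z²`, for `p, q` coprime of opposite parity.
Since `Z² = (p² - q²)² + (pq)²` is a primitive Pythagorean triple, `p² - q² = e² - f²`,
`pq = 2ef` and `|Z| = e² + f²`. Say `q = 2b`; then `e f = p b`, so `e = AB`, `f = CD`,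
`p = AC`, `b = BD`, and `p² - 4b² = e² - f²` becomes `B²(A² + 4D²) = C²(A² + D²)`.
Coprimality forces `A² + D² = B²` and `A² + (2D)² = C²`, and parametrising the second triple
as `A = r² - s²`, `D = rs` gives `r⁴ - r²s² + s⁴ = B²` with `|B| ≤ |e| < |Z|`.
-/

theorem exists_eq_mul_of_mul_eq_mul {α : Type*} [CommMonoidWithZero α] [IsCancelMulZero α]
    [DecompositionMonoid α] {a b c d : α} (h : a * b = c * d) (ha : a ≠ 0) :
    ∃ x y z w, a = x * y ∧ b = z * w ∧ c = x * z ∧ d = y * w := by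
  obtain ⟨x, y, ⟨z, rfl⟩, ⟨w, rfl⟩, rfl⟩ := exists_dvd_and_dvd_of_dvd_mul (Dvd.intro b h)
  exact ⟨x, y, z, w, rfl, mul_left_cancel₀ ha (by rw [h, mul_mul_mul_comm]), rfl, rfl⟩

namespace Int

lemma not_three_dvd_sq_add_sq_of_isCoprime {a b : ℤ} (h : IsCoprime a b) :
    ¬ 3 ∣ a ^ 2 + b ^ 2 := by
  intro h3
  have hmod3 : ∀ x y : ZMod 3, x ^ 2 + y ^ 2 = 0 → x = 0 ∧ y = 0 := by decide
  obtain ⟨ha, hb⟩ := hmod3 a b (by exact_mod_cast (ZMod.intCast_zmod_eq_zero_iff_dvd _ 3).mpr h3)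
  rw [ZMod.intCast_zmod_eq_zero_iff_dvd] at ha hb
  have := Int.isUnit_iff.mp (h.isUnit_of_dvd' ha hb)
  omega

lemma exists_sq_sub_sq_of_quartic_eq_sq {p q Z : ℤ} (hcop : IsCoprime p q) (hpar : Odd (p + q))
    (hpq : p * q ≠ 0) (h : p ^ 4 - p ^ 2 * q ^ 2 + q ^ 4 = Z ^ 2) :
    ∃ e f, p ^ 2 - q ^ 2 = e ^ 2 - f ^ 2 ∧ p * q = 2 * e * f ∧ |Z| = e ^ 2 + f ^ 2 ∧
      IsCoprime e f := by
  have htriple : PythagoreanTriple (p ^ 2 - q ^ 2) (p * q) |Z| := by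
    rw [PythagoreanTriple, abs_mul_abs_self]
    linear_combination h
  have hcop' : IsCoprime (p ^ 2 - q ^ 2) (p * q) := by
    refine IsCoprime.mul_right ?_ ?_
    · rw [show p ^ 2 - q ^ 2 = -q ^ 2 + p * p by ring]
      exact (hcop.symm.pow_left.neg_left).add_mul_left_left p
    · rw [show p ^ 2 - q ^ 2 = p ^ 2 + q * -q by ring]
      exact hcop.pow_left.add_mul_left_left (-q)
  have hodd : Odd (p ^ 2 - q ^ 2) := by
    rw [show p ^ 2 - q ^ 2 = (p + q) * (p + q - 2 * q) by ring]
    exact hpar.mul (hpar.sub_even (even_two_mul q))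
  have hZ0 : 0 < |Z| := by
    refine abs_pos.mpr fun hZ ↦ hpq ?_
    subst hZ
    nlinarith [sq_nonneg (p ^ 2 - q ^ 2), sq_nonneg (p * q)]
  obtain ⟨e, f, he, hf, hZ, hef, -, -⟩ := htriple.coprime_classification'
    (Int.isCoprime_iff_gcd_eq_one.mp hcop') (Int.odd_iff.mp hodd) hZ0
  exact ⟨e, f, he, hf, hZ, Int.isCoprime_iff_gcd_eq_one.mpr hef⟩

lemma exists_quartic_eq_sq_of_sq_sub_four_sq {a b E F : ℤ} (ha : Odd a) (hb : b ≠ 0)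
    (hEF : IsCoprime E F) (hdiff : a ^ 2 - 4 * b ^ 2 = E ^ 2 - F ^ 2) (hprod : a * b = E * F) :
    ∃ r s B, IsCoprime r s ∧ Odd (r + s) ∧ r * s ≠ 0 ∧ B ∣ E ∧
      r ^ 4 - r ^ 2 * s ^ 2 + s ^ 4 = B ^ 2 := by
  have ha0 : a ≠ 0 := by
    rintro rfl
    simp at ha
  have hE : E ≠ 0 := by
    rintro rfl
    exact mul_ne_zero ha0 hb (by simpa using hprod)
  obtain ⟨A, B, C, D, rfl, rfl, rfl, rfl⟩ := exists_eq_mul_of_mul_eq_mul hprod.symm hE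
  have hAD : IsCoprime A D := hEF.of_mul_left_left.of_mul_right_right
  have hBC : IsCoprime B C := hEF.of_mul_left_right.of_mul_right_left
  have hC : C ≠ 0 := right_ne_zero_of_mul ha0
  have hD : D ≠ 0 := right_ne_zero_of_mul hb
  have hkey : B ^ 2 * (A ^ 2 + 4 * D ^ 2) = C ^ 2 * (A ^ 2 + D ^ 2) := by
    linear_combination -hdiff
  obtain ⟨t, htC⟩ : C ^ 2 ∣ A ^ 2 + 4 * D ^ 2 :=
    hBC.symm.pow.dvd_of_dvd_mul_left ⟨_, hkey⟩
  have htB : A ^ 2 + D ^ 2 = B ^ 2 * t :=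
    mul_left_cancel₀ (pow_ne_zero 2 hC) (by linear_combination -hkey + B ^ 2 * htC)
  -- `t` divides both `3 A² = 4 (A² + D²) - (A² + 4 D²)` and `3 D²`
  have ht3 : t ∣ 3 := by
    obtain ⟨u, v, huv⟩ := hAD.pow (m := 2) (n := 2)
    exact ⟨u * (4 * B ^ 2 - C ^ 2) + v * (C ^ 2 - B ^ 2), by
      linear_combination -3 * huv + u * (4 * htB - htC) + v * (htC - htB)⟩
  have ht : t = 1 := by
    have ht0 : 0 < t := by
      have : 0 < B ^ 2 * t := by rw [← htB]; positivity
      exact pos_of_mul_pos_right this (sq_nonneg B)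
    have := Int.le_of_dvd three_pos ht3
    interval_cases t
    · rfl
    · norm_num at ht3
    · exact absurd ⟨B ^ 2, by rw [htB, mul_comm]⟩ (not_three_dvd_sq_add_sq_of_isCoprime hAD)
  subst ht
  have hA : Odd A := (Int.odd_mul.mp ha).1
  have htriple : PythagoreanTriple A (2 * D) |C| := by
    rw [PythagoreanTriple, abs_mul_abs_self]
    linear_combination htC
  have hA2D : IsCoprime A (2 * D) := by
    refine IsCoprime.mul_right ?_ hAD
    refine (Int.prime_two.coprime_iff_not_dvd.mpr ?_).symm
    rwa [← even_iff_two_dvd, Int.not_even_iff_odd]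
  obtain ⟨r, s, hAr, h2D, -, hrs, hpar, -⟩ := htriple.coprime_classification'
    (Int.isCoprime_iff_gcd_eq_one.mp hA2D) (Int.odd_iff.mp hA) (abs_pos.mpr hC)
  have hDrs : D = r * s := by linarith
  refine ⟨r, s, B, Int.isCoprime_iff_gcd_eq_one.mpr hrs, Int.odd_iff.mpr (by omega), hDrs ▸ hD,
    dvd_mul_left B A, ?_⟩
  linear_combination htB - (r ^ 2 - s ^ 2 + A) * hAr - (r * s + D) * hDrs

lemma exists_smaller_quartic_eq_sq {p q Z : ℤ} (hcop : IsCoprime p q) (hpar : Odd (p + q))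
    (hpq : p * q ≠ 0) (h : p ^ 4 - p ^ 2 * q ^ 2 + q ^ 4 = Z ^ 2) :
    ∃ r s Z' : ℤ, IsCoprime r s ∧ Odd (r + s) ∧ r * s ≠ 0 ∧
      r ^ 4 - r ^ 2 * s ^ 2 + s ^ 4 = Z' ^ 2 ∧ Z'.natAbs < Z.natAbs := by
  wlog hq : Even q generalizing p q
  · have hp : Even p := by
      rw [Int.not_even_iff_odd] at hq
      simpa using hpar.sub_odd hq
    exact this hcop.symm (by rwa [add_comm]) (by rwa [mul_comm]) (by linear_combination h) hp
  obtain ⟨b, rfl⟩ := hq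
  obtain ⟨e, f, hdiff, hprod, hZ, hef⟩ := exists_sq_sub_sq_of_quartic_eq_sq hcop hpar hpq h
  have he : e ≠ 0 := by rintro rfl; simp_all
  have hf : f ≠ 0 := by rintro rfl; simp_all
  obtain ⟨r, s, B, hrs, hpar', hrs0, hBe, hB⟩ := exists_quartic_eq_sq_of_sq_sub_four_sq
    (b := b) (Int.odd_add.mp hpar |>.mpr ⟨b, rfl⟩) (by rintro rfl; simp at hpq)
    hef (by linear_combination hdiff) (mul_left_cancel₀ two_ne_zero (by linear_combination hprod))
  refine ⟨r, s, B, hrs, hpar', hrs0, hB, ?_⟩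
  calc B.natAbs ≤ e.natAbs := Int.natAbs_le_of_dvd_ne_zero hBe he
    _ < Z.natAbs := by
      zify
      have := Int.natAbs_le_self_sq e
      push_cast at this
      have : 0 < f ^ 2 := by positivity
      linarith

theorem quartic_ne_sq {p q : ℤ} (hcop : IsCoprime p q) (hpar : Odd (p + q))
    (hpq : p * q ≠ 0) (Z : ℤ) : p ^ 4 - p ^ 2 * q ^ 2 + q ^ 4 ≠ Z ^ 2 := by
  induction hZ : Z.natAbs using Nat.strong_induction_on generalizing p q Z with
  | _ n ih =>
    intro h
    obtain ⟨r, s, Z', hrs, hpar', hrs0, h', hlt⟩ := exists_smaller_quartic_eq_sq hcop hpar hpq h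
    exact ih _ (hZ ▸ hlt) hrs hpar' hrs0 Z' rfl h'

end Int

theorem d₂_irrational (m n : ℕ) (hn : 0 < n) (hmn : n < m)
    (hcop : Nat.gcd m n = 1) (hpar : (m + n) % 2 = 1) :
    (¬ ∃ k : ℕ, m ^ 4 - m ^ 2 * n ^ 2 + n ^ 4 = k ^ 2) ∧
    Irrational (Real.sqrt ((m : ℝ) ^ 4 - (m : ℝ) ^ 2 * (n : ℝ) ^ 2 + (n : ℝ) ^ 4)) := by
  have hle : m ^ 2 * n ^ 2 ≤ m ^ 4 := by
    rw [show m ^ 4 = m ^ 2 * m ^ 2 by ring]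
    exact Nat.mul_le_mul_left _ (Nat.pow_le_pow_left hmn.le 2)
  have hsq : ¬ IsSquare (m ^ 4 - m ^ 2 * n ^ 2 + n ^ 4) := by
    rintro ⟨k, hk⟩
    refine Int.quartic_ne_sq (Nat.isCoprime_iff_coprime.mpr hcop)
      (by exact_mod_cast Nat.odd_iff.mpr hpar) (mul_ne_zero (by omega) (by omega)) k ?_
    zify [hle] at hk
    linear_combination hk
  refine ⟨fun ⟨k, hk⟩ ↦ hsq ⟨k, hk.trans (sq k)⟩, ?_⟩
  have hcast : (m : ℝ) ^ 4 - (m : ℝ) ^ 2 * (n : ℝ) ^ 2 + (n : ℝ) ^ 4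
      = ((m ^ 4 - m ^ 2 * n ^ 2 + n ^ 4 : ℕ) : ℝ) := by
    push_cast [hle]
    ring
  rw [hcast]
  exact irrational_sqrt_natCast_iff.mpr hsq
end

section
/- Let β > γ > 0 be real numbers and α > 0 with α² = β² + γ² (the legs and hypotenuse of a nonisosceles right triangle), and let R₁ = α²/(4β), R₂ = α²/(4γ). Then the following are equivalent: (i) R₁ = γ; (ii) R₂ = β; (iii) β/γ = 2 + Real.sqrt 3 (equivalently, the angle ω with tan ω = β/γ equals 75°). -/
/-! With `t = β / γ`, both `R₁ = γ` and `R₂ = β` say `α² = 4βγ`, i.e. `β² - 4βγ + γ² = 0`, i.e.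
`(t - 2)² = 3`. Of the two roots `2 ± √3` only `2 + √3` exceeds `1`, which is forced by `γ < β`. -/

lemma div_four_mul_eq_iff_eq_four_mul_mul {a b c : ℝ} (hb : b ≠ 0) :
    a / (4 * b) = c ↔ a = 4 * b * c := by
  rw [div_eq_iff (mul_ne_zero four_ne_zero hb), mul_comm c]

lemma sq_add_sq_eq_four_mul_mul_iff {β γ : ℝ} (hγ : γ ≠ 0) :
    β ^ 2 + γ ^ 2 = 4 * β * γ ↔ (β / γ - 2) ^ 2 = 3 := by
  have key : (β / γ - 2) ^ 2 - 3 = (β ^ 2 + γ ^ 2 - 4 * β * γ) / γ ^ 2 := by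
    field_simp
    ring
  rw [← sub_eq_zero, ← sub_eq_zero (a := (β / γ - 2) ^ 2), key, div_eq_zero_iff,
    or_iff_left (pow_ne_zero 2 hγ)]

lemma sub_two_sq_eq_three_iff {t : ℝ} (ht : 1 < t) : (t - 2) ^ 2 = 3 ↔ t = 2 + √3 := by
  have hsqrt : 1 < √3 := by
    rw [Real.lt_sqrt zero_le_one]
    norm_num
  nth_rw 1 [← Real.sq_sqrt zero_le_three]
  rw [sq_eq_sq_iff_eq_or_eq_neg]
  constructor
  · rintro (h | h) <;> linarith
  · intro h
    left
    linarith

theorem R₁_eq_γ_iff_general (α β γ : ℝ) (hγ : 0 < γ) (hβγ : γ < β)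
    (hpyth : α ^ 2 = β ^ 2 + γ ^ 2) :
    (α ^ 2 / (4 * β) = γ ↔ α ^ 2 / (4 * γ) = β) ∧
    (α ^ 2 / (4 * γ) = β ↔ β / γ = 2 + Real.sqrt 3) := by
  have hβ : 0 < β := hγ.trans hβγ
  have hR₂ : α ^ 2 / (4 * γ) = β ↔ β ^ 2 + γ ^ 2 = 4 * β * γ := by
    rw [div_four_mul_eq_iff_eq_four_mul_mul hγ.ne', hpyth, mul_right_comm]
  refine ⟨?_, ?_⟩
  · rw [div_four_mul_eq_iff_eq_four_mul_mul hβ.ne', div_four_mul_eq_iff_eq_four_mul_mul hγ.ne',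
      mul_right_comm]
  · rw [hR₂, sq_add_sq_eq_four_mul_mul_iff hγ.ne',
      sub_two_sq_eq_three_iff ((one_lt_div hγ).mpr hβγ)]

theorem R₁_eq_γ_iff (α β γ : ℝ) (hγ : 0 < γ) (hβγ : γ < β) (hα : 0 < α)
    (hpyth : α ^ 2 = β ^ 2 + γ ^ 2) :
    (α ^ 2 / (4 * β) = γ ↔ α ^ 2 / (4 * γ) = β) ∧
    (α ^ 2 / (4 * γ) = β ↔ β / γ = 2 + Real.sqrt 3) :=
  R₁_eq_γ_iff_general α β γ hγ hβγ hpyth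
end
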